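/- arXiv:2405.02833 — 5 statements merged into one kernel-verified Lean document; each statement's English description precedes it below -/
import Mathlib

section
/- Let F be a continuous distribution function on ℝ with F ∈ MDA(H) for a GEV distribution function H, with normalizing sequences (c*_n), c*_n > 0, and (d*_n). For each n ∈ ℕ let δ_n be an n-variate copula diagonal, and let r : ℕ → (0,∞) be a rate function with r_n → ∞ as n → ∞ such that the diagonal power distortions D_n^r(u) = δ_n(u^{1/r_n}) converge pointwise on [0,1] to a continuous function D. Then for every x ∈ ℝ, δ_n(F(c*_{⌈r_n⌉} x + d*_{⌈r_n⌉})) → D(H(x)) as n → ∞ (i.e., the maxima M_n satisfy P((M_n − d*_{⌈r_n⌉})/c*_{⌈r_n⌉} ≤ x) → D(H(x))), and moreover D is a continuous distribution function on [0,1], i.e., D is nondecreasing with D(0) = 0 and D(1) = 1. (Theorem 2.x(i), generalized Fisher–Tippett–Gnedenko convergence.) -/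
open Filter Set Topology

/-- The generalized extreme value (GEV) distribution function `H_{ξ,μ,σ}`. -/
noncomputable def GEVcdf (ξ μ σ : ℝ) : ℝ → ℝ := fun x =>
  if ξ = 0 then Real.exp (-Real.exp (-(x - μ) / σ))
  else if 0 < 1 + ξ * (x - μ) / σ then Real.exp (-(1 + ξ * (x - μ) / σ) ^ (-1 / ξ))
  else if 0 < ξ then 0 else 1

/-- A distribution function is GEV if it equals some `H_{ξ,μ,σ}` with `σ > 0`. -/
def IsGEV (H : ℝ → ℝ) : Prop := ∃ ξ μ σ : ℝ, 0 < σ ∧ H = GEVcdf ξ μ σ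

/-- A distribution function on `ℝ`: nondecreasing, right-continuous, with limits 0 at `-∞`
and 1 at `∞`, taking values in `[0,1]`. -/
def IsDistFun (F : ℝ → ℝ) : Prop :=
  Monotone F ∧ (∀ x, ContinuousWithinAt F (Ici x) x) ∧
    Tendsto F atBot (nhds 0) ∧ Tendsto F atTop (nhds 1) ∧ ∀ x, F x ∈ Icc (0:ℝ) 1

/-- The properties of the diagonal `u ↦ C_n(u,…,u)` of an `n`-dimensional copula. -/
def IsCopulaDiagonal (n : ℕ) (δ : ℝ → ℝ) : Prop :=
  δ 0 = 0 ∧ δ 1 = 1 ∧ MonotoneOn δ (Icc 0 1) ∧ (∀ u ∈ Icc (0:ℝ) 1, δ u ≤ u) ∧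
    ∀ u ∈ Icc (0:ℝ) 1, ∀ v ∈ Icc (0:ℝ) 1, |δ u - δ v| ≤ (n : ℝ) * |u - v|

/-- A distribution function on `[0,1]`: nondecreasing, right-continuous, `D(0)=0`, `D(1)=1`,
with values in `[0,1]`. -/
def IsDistFun01 (D : ℝ → ℝ) : Prop :=
  D 0 = 0 ∧ D 1 = 1 ∧ MonotoneOn D (Icc 0 1) ∧
    (∀ u ∈ Ico (0:ℝ) 1, ContinuousWithinAt D (Icc u 1) u) ∧
    ∀ u ∈ Icc (0:ℝ) 1, D u ∈ Icc (0:ℝ) 1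

/-- A degenerate distribution function `x ↦ 1_{[a,∞)}(x)`. -/
noncomputable def IsDegenerateDF (G : ℝ → ℝ) : Prop :=
  ∃ a : ℝ, ∀ x, G x = if a ≤ x then 1 else 0

/-- An Archimedean generator: continuous on `[0,∞)`, `ψ(0)=1`, values in `[0,1]`,
`ψ(t) → 0` as `t → ∞`, strictly decreasing on `[0, inf{x : ψ(x)=0}]` (equivalently,
strictly decreasing as long as it is positive). -/
def IsArchimedeanGenerator (ψ : ℝ → ℝ) : Prop :=
  ContinuousOn ψ (Ici 0) ∧ ψ 0 = 1 ∧ (∀ t ∈ Ici (0:ℝ), ψ t ∈ Icc (0:ℝ) 1) ∧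
    Tendsto ψ atTop (nhds 0) ∧
    ∀ s t : ℝ, 0 ≤ s → s < t → 0 < ψ s → ψ t < ψ s


/-!
Write `u_n = F(c*_{⌈r_n⌉} x + d*_{⌈r_n⌉})`. Since `(u ^ r) ^ (1 / r) = u`, we have
`δ_n(u_n) = D^r_n(u_n ^ r_n)`, and `u_n ^ r_n` has the same limit `H(x)` as `u_n ^ ⌈r_n⌉`
because `r_n / ⌈r_n⌉ → 1`. Pointwise convergence of the monotone functions `D^r_n` to the
continuous `D` is locally uniform (sandwich `D^r_n(w_n)` between `D^r_n(a)` and `D^r_n(b)` for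
fixed `a < H(x) < b`), so `D^r_n(u_n ^ r_n) → D(H(x))`. Monotonicity and the boundary values of
`D` pass to the limit from those of the `δ_n`.
-/

section MonotoneSandwich

variable {ι : Type*} {l : Filter ι} {g : ι → ℝ → ℝ} {G : ℝ → ℝ} {w : ι → ℝ} {a b h : ℝ}

theorem eventually_lt_of_tendsto_of_monotoneOn
    (hmono : ∀ᶠ i in l, MonotoneOn (g i) (Icc a b))
    (hg : ∀ x ∈ Icc a b, Tendsto (fun i => g i x) l (𝓝 (G x)))
    (hG : ContinuousWithinAt G (Icc a b) h) (hh : h ∈ Icc a b)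
    (hw : ∀ᶠ i in l, w i ∈ Icc a b) (hlim : Tendsto w l (𝓝 h))
    {y : ℝ} (hy : G h < y) : ∀ᶠ i in l, g i (w i) < y := by
  obtain ⟨c, hc, hGc, hwc⟩ : ∃ c ∈ Icc a b, G c < y ∧ ∀ᶠ i in l, w i ≤ c := by
    rcases hh.2.eq_or_lt with rfl | hlt
    · exact ⟨h, hh, hy, hw.mono fun i hi => hi.2⟩
    · have := left_nhdsWithin_Ioc_neBot hlt
      have hGy : ∀ᶠ x in 𝓝[Ioc h b] h, G x < y :=
        (hG.mono (Ioc_subset_Icc_self.trans (Icc_subset_Icc_left hh.1))).eventually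
          (eventually_lt_nhds hy)
      obtain ⟨c, hGc, hc⟩ := (hGy.and self_mem_nhdsWithin).exists
      exact ⟨c, ⟨hh.1.trans hc.1.le, hc.2⟩, hGc,
        (hlim.eventually (eventually_lt_nhds hc.1)).mono fun i hi => hi.le⟩
  filter_upwards [hmono, hw, hwc, (hg c hc).eventually (eventually_lt_nhds hGc)]
    with i hmono_i hw_i hwc_i hgc_i
  exact (hmono_i hw_i hc hwc_i).trans_lt hgc_i

theorem eventually_gt_of_tendsto_of_monotoneOn
    (hmono : ∀ᶠ i in l, MonotoneOn (g i) (Icc a b))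
    (hg : ∀ x ∈ Icc a b, Tendsto (fun i => g i x) l (𝓝 (G x)))
    (hG : ContinuousWithinAt G (Icc a b) h) (hh : h ∈ Icc a b)
    (hw : ∀ᶠ i in l, w i ∈ Icc a b) (hlim : Tendsto w l (𝓝 h))
    {y : ℝ} (hy : y < G h) : ∀ᶠ i in l, y < g i (w i) := by
  obtain ⟨c, hc, hGc, hwc⟩ : ∃ c ∈ Icc a b, y < G c ∧ ∀ᶠ i in l, c ≤ w i := by
    rcases hh.1.eq_or_lt with rfl | hlt
    · exact ⟨a, hh, hy, hw.mono fun i hi => hi.1⟩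
    · have := right_nhdsWithin_Ico_neBot hlt
      have hGy : ∀ᶠ x in 𝓝[Ico a h] h, y < G x :=
        (hG.mono (Ico_subset_Icc_self.trans (Icc_subset_Icc_right hh.2))).eventually
          (eventually_gt_nhds hy)
      obtain ⟨c, hGc, hc⟩ := (hGy.and self_mem_nhdsWithin).exists
      exact ⟨c, ⟨hc.1, hc.2.le.trans hh.2⟩, hGc,
        (hlim.eventually (eventually_gt_nhds hc.2)).mono fun i hi => hi.le⟩
  filter_upwards [hmono, hw, hwc, (hg c hc).eventually (eventually_gt_nhds hGc)]
    with i hmono_i hw_i hwc_i hgc_i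
  exact hgc_i.trans_le (hmono_i hc hw_i hwc_i)

theorem tendsto_apply_of_tendsto_of_monotoneOn
    (hmono : ∀ᶠ i in l, MonotoneOn (g i) (Icc a b))
    (hg : ∀ x ∈ Icc a b, Tendsto (fun i => g i x) l (𝓝 (G x)))
    (hG : ContinuousWithinAt G (Icc a b) h) (hh : h ∈ Icc a b)
    (hw : ∀ᶠ i in l, w i ∈ Icc a b) (hlim : Tendsto w l (𝓝 h)) :
    Tendsto (fun i => g i (w i)) l (𝓝 (G h)) :=
  tendsto_order.2 ⟨fun _ hy => eventually_gt_of_tendsto_of_monotoneOn hmono hg hG hh hw hlim hy,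
    fun _ hy => eventually_lt_of_tendsto_of_monotoneOn hmono hg hG hh hw hlim hy⟩

end MonotoneSandwich

theorem tendsto_rpow_of_tendsto_pow_natCeil {ι : Type*} {l : Filter ι} {u r : ι → ℝ} {h : ℝ}
    (hu : ∀ᶠ i in l, 0 ≤ u i) (hr : Tendsto r l atTop)
    (hlim : Tendsto (fun i => u i ^ ⌈r i⌉₊) l (𝓝 h)) :
    Tendsto (fun i => u i ^ r i) l (𝓝 h) := by
  have hratio : Tendsto (fun i => r i / ⌈r i⌉₊) l (𝓝 1) := by
    simpa using (tendsto_nat_ceil_div_atTop.comp hr).inv₀ one_ne_zero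
  refine ((hlim.rpow hratio (Or.inr one_pos)).congr' ?_).trans (by rw [Real.rpow_one])
  filter_upwards [hu, hr.eventually_gt_atTop 0] with i hu_i hr_i
  have hceil : (⌈r i⌉₊ : ℝ) ≠ 0 := Nat.cast_ne_zero.2 (Nat.ceil_pos.2 hr_i).ne'
  rw [← Real.rpow_natCast, ← Real.rpow_mul hu_i, mul_div_cancel₀ _ hceil]

theorem Real.rpow_mem_Icc_zero_one {x p : ℝ} (hx : x ∈ Icc (0 : ℝ) 1) (hp : 0 ≤ p) :
    x ^ p ∈ Icc (0 : ℝ) 1 :=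
  ⟨Real.rpow_nonneg hx.1 p, Real.rpow_le_one hx.1 hx.2 hp⟩

/-- The paper's `D^r_n` is `diagonalPowerDistortion δ_n r_n`. -/
noncomputable def diagonalPowerDistortion (δ : ℝ → ℝ) (ρ : ℝ) (u : ℝ) : ℝ :=
  δ (u ^ (1 / ρ))

theorem monotoneOn_diagonalPowerDistortion {δ : ℝ → ℝ} {ρ : ℝ}
    (hδ : MonotoneOn δ (Icc 0 1)) (hρ : 0 ≤ ρ) :
    MonotoneOn (diagonalPowerDistortion δ ρ) (Icc 0 1) :=
  hδ.comp ((Real.monotoneOn_rpow_Ici_of_exponent_nonneg (by positivity)).mono Icc_subset_Ici_self)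
    fun _ hu => Real.rpow_mem_Icc_zero_one hu (by positivity)

theorem diagonalPowerDistortion_rpow {δ : ℝ → ℝ} {ρ u : ℝ} (hu : 0 ≤ u) (hρ : ρ ≠ 0) :
    diagonalPowerDistortion δ ρ (u ^ ρ) = δ u := by
  rw [diagonalPowerDistortion, one_div, Real.rpow_rpow_inv hu hρ]

theorem tendsto_diagonal_of_tendsto_pow_natCeil {δ : ℕ → ℝ → ℝ} {r u : ℕ → ℝ} {D : ℝ → ℝ}
    {h : ℝ} (hδ : ∀ n, MonotoneOn (δ n) (Icc 0 1)) (hr : Tendsto r atTop atTop)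
    (hconv : ∀ v ∈ Icc (0 : ℝ) 1,
      Tendsto (fun n => diagonalPowerDistortion (δ n) (r n) v) atTop (𝓝 (D v)))
    (hD : ContinuousWithinAt D (Icc 0 1) h) (hh : h ∈ Icc (0 : ℝ) 1)
    (hu : ∀ n, u n ∈ Icc (0 : ℝ) 1) (hlim : Tendsto (fun n => u n ^ ⌈r n⌉₊) atTop (𝓝 h)) :
    Tendsto (fun n => δ n (u n)) atTop (𝓝 (D h)) := by
  have hpos := hr.eventually_gt_atTop 0
  have hw : Tendsto (fun n => u n ^ r n) atTop (𝓝 h) :=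
    tendsto_rpow_of_tendsto_pow_natCeil (.of_forall fun n => (hu n).1) hr hlim
  refine (tendsto_apply_of_tendsto_of_monotoneOn
    (hpos.mono fun n hn => monotoneOn_diagonalPowerDistortion (hδ n) hn.le) hconv hD hh
    (hpos.mono fun n hn => Real.rpow_mem_Icc_zero_one (hu n) hn.le) hw).congr' ?_
  filter_upwards [hpos] with n hn
  exact diagonalPowerDistortion_rpow (hu n).1 hn.ne'

theorem maxima_dependent_convergence_general
    (F H D : ℝ → ℝ) (cs ds : ℕ → ℝ) (δ : ℕ → ℝ → ℝ) (r : ℕ → ℝ)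
    (hF : IsDistFun F)
    (hMDA : ∀ x, Tendsto (fun n => F (cs n * x + ds n) ^ n) atTop (nhds (H x)))
    (hδ : ∀ n, IsCopulaDiagonal n (δ n))
    (hrtop : Tendsto r atTop atTop)
    (hDcont : ContinuousOn D (Icc 0 1))
    (hconv : ∀ u ∈ Icc (0:ℝ) 1,
      Tendsto (fun n => δ n (u ^ (1 / r n))) atTop (nhds (D u))) :
    (∀ x, Tendsto (fun n => δ n (F (cs (Nat.ceil (r n)) * x + ds (Nat.ceil (r n)))))
        atTop (nhds (D (H x)))) ∧
      MonotoneOn D (Icc 0 1) ∧ D 0 = 0 ∧ D 1 = 1 := by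
  have hpos := hrtop.eventually_gt_atTop 0
  have hF01 : ∀ x, F x ∈ Icc (0 : ℝ) 1 := hF.2.2.2.2
  refine ⟨fun x => ?_, fun u hu v hv huv => ?_, ?_, ?_⟩
  · have hH01 : H x ∈ Icc (0 : ℝ) 1 := isClosed_Icc.mem_of_tendsto (hMDA x)
      (.of_forall fun n => ⟨pow_nonneg (hF01 _).1 n, pow_le_one₀ (hF01 _).1 (hF01 _).2⟩)
    exact tendsto_diagonal_of_tendsto_pow_natCeil (fun n => (hδ n).2.2.1) hrtop hconv
      (hDcont _ hH01) hH01 (fun n => hF01 _) ((hMDA x).comp (tendsto_nat_ceil_atTop.comp hrtop))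
  · refine le_of_tendsto_of_tendsto (hconv u hu) (hconv v hv) ?_
    filter_upwards [hpos] with n hn
    exact monotoneOn_diagonalPowerDistortion (hδ n).2.2.1 hn.le hu hv huv
  · refine tendsto_nhds_unique (hconv 0 ⟨le_rfl, zero_le_one⟩) (tendsto_const_nhds.congr' ?_)
    filter_upwards [hpos] with n hn
    rw [Real.zero_rpow (by positivity), (hδ n).1]
  · refine tendsto_nhds_unique (hconv 1 ⟨zero_le_one, le_rfl⟩) (tendsto_const_nhds.congr' ?_)
    filter_upwards with n
    rw [Real.one_rpow, (hδ n).2.1]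

/-- Theorem 2.x(i): generalized Fisher–Tippett–Gnedenko convergence under dependence. -/
theorem maxima_dependent_convergence
    (F H D : ℝ → ℝ) (cs ds : ℕ → ℝ) (δ : ℕ → ℝ → ℝ) (r : ℕ → ℝ)
    (hF : IsDistFun F) (hFcont : Continuous F)
    (hH : IsGEV H) (hcs : ∀ n, 0 < cs n)
    (hMDA : ∀ x, Tendsto (fun n => F (cs n * x + ds n) ^ n) atTop (nhds (H x)))
    (hδ : ∀ n, IsCopulaDiagonal n (δ n))
    (hr : ∀ n, 0 < r n) (hrtop : Tendsto r atTop atTop)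
    (hDcont : ContinuousOn D (Icc 0 1))
    (hconv : ∀ u ∈ Icc (0:ℝ) 1,
      Tendsto (fun n => δ n (u ^ (1 / r n))) atTop (nhds (D u))) :
    (∀ x, Tendsto (fun n => δ n (F (cs (Nat.ceil (r n)) * x + ds (Nat.ceil (r n)))))
        atTop (nhds (D (H x)))) ∧
      MonotoneOn D (Icc 0 1) ∧ D 0 = 0 ∧ D 1 = 1 :=
  maxima_dependent_convergence_general F H D cs ds δ r hF hMDA hδ hrtop hDcont hconv
end

section
/- Let F be a continuous distribution function on ℝ with F ∈ MDA(H) for a GEV distribution function H, with normalizing sequences (c*_n), c*_n > 0, and (d*_n). For each n ∈ ℕ let δ_n be an n-variate copula diagonal. Suppose r : ℕ → (0,∞) satisfies 1/r_n = O(1/n) (i.e., there is κ > 0 with n/r_n ≤ κ for all large n), and suppose D is a distribution function on [0,1] such that for all continuity points x of D∘H, δ_n(F(c*_{⌈r_n⌉} x + d*_{⌈r_n⌉})) → D(H(x)) as n → ∞. Then the diagonal power distortion satisfies D_n^r(u) = δ_n(u^{1/r_n}) → D(u) as n → ∞ for u ∈ {0,1} and for all continuity points u ∈ (0,1) of D.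 (Theorem 2.x(ii).) -/
open Filter Set Topology

/-! For `u ∈ (0,1)` choose `x` with `H x = u` at which `H` is continuous; then `x` is a continuity
point of `D ∘ H`, and with `m_n = ⌈r_n⌉` and `a_n = F(c*_{m_n} x + d*_{m_n})` we have
`a_n ^ m_n → u` and `δ_n(a_n) → D(u)`. As `δ_n` is `n`-Lipschitz and `exp` is 1-Lipschitz on
`(-∞, 0]`, `|δ_n(u^{1/r_n}) - δ_n(a_n)| ≤ n |log u / r_n - log a_n|
= (n / r_n) |log u - (r_n / m_n) log (a_n ^ m_n)|`, a bounded sequence times a null one. -/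

section

open Real

lemma abs_exp_sub_exp_le_of_nonpos {s t : ℝ} (hs : s ≤ 0) (ht : t ≤ 0) :
    |exp s - exp t| ≤ |s - t| := by
  wlog hts : t ≤ s generalizing s t
  · rw [abs_sub_comm, abs_sub_comm s]
    exact this ht hs (le_of_not_ge hts)
  have hsplit : exp s - exp t = exp s * (1 - exp (-(s - t))) := by
    rw [mul_sub, mul_one, ← exp_add]; ring_nf
  rw [hsplit, abs_of_nonneg (sub_nonneg.2 hts), abs_of_nonneg
    (mul_nonneg (exp_pos s).le (sub_nonneg.2 (exp_le_one_iff.2 (by linarith))))]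
  calc exp s * (1 - exp (-(s - t))) ≤ 1 * (s - t) :=
        mul_le_mul (exp_le_one_iff.2 hs) (by linarith [one_sub_le_exp_neg (s - t)])
          (sub_nonneg.2 (exp_le_one_iff.2 (by linarith))) zero_le_one
    _ = s - t := one_mul _

lemma abs_rpow_one_div_sub_le {u a r : ℝ} (hu : u ∈ Ioc 0 1) (ha : a ∈ Ioc 0 1) (hr : 0 ≤ r) :
    |u ^ (1 / r) - a| ≤ |log u / r - log a| := by
  have hlogu : log u ≤ 0 := log_nonpos hu.1.le hu.2
  have hloga : log a ≤ 0 := log_nonpos ha.1.le ha.2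
  rw [rpow_def_of_pos hu.1, mul_one_div]
  conv_lhs => rw [← exp_log ha.1]
  exact abs_exp_sub_exp_le_of_nonpos (div_nonpos_of_nonpos_of_nonneg hlogu hr) hloga

lemma tendsto_atTop_of_natCast_div_le {r : ℕ → ℝ} {κ : ℝ} (hκ : 0 < κ) (hr : ∀ n, 0 < r n)
    (hrκ : ∀ᶠ n : ℕ in atTop, (n : ℝ) / r n ≤ κ) : Tendsto r atTop atTop := by
  refine tendsto_atTop_mono' atTop ?_ (tendsto_natCast_atTop_atTop.atTop_div_const hκ)
  filter_upwards [hrκ] with n hn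
  rw [div_le_iff₀ (hr n)] at hn
  rwa [div_le_iff₀ hκ, mul_comm]

lemma tendsto_natCast_mul_log_div_sub_log {r a : ℕ → ℝ} {u κ : ℝ} (hu : u ≠ 0) (hκ : 0 < κ)
    (hr : ∀ n, 0 < r n) (hrκ : ∀ᶠ n : ℕ in atTop, (n : ℝ) / r n ≤ κ)
    (ha : Tendsto (fun n => a n ^ ⌈r n⌉₊) atTop (𝓝 u)) :
    Tendsto (fun n => n * (log u / r n - log (a n))) atTop (𝓝 0) := by
  have hratio : Tendsto (fun n => r n / ⌈r n⌉₊) atTop (𝓝 1) := by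
    simpa using (tendsto_nat_ceil_div_atTop.comp
      (tendsto_atTop_of_natCast_div_le hκ hr hrκ)).inv₀ one_ne_zero
  have hlog : Tendsto (fun n => log u - r n * log (a n)) atTop (𝓝 0) := by
    have hlim := tendsto_const_nhds (x := log u) |>.sub
      (hratio.mul ((continuousAt_log hu).tendsto.comp ha))
    rw [one_mul, sub_self] at hlim
    refine hlim.congr fun n => ?_
    have hceil : (⌈r n⌉₊ : ℝ) ≠ 0 := Nat.cast_ne_zero.2 (Nat.ceil_pos.2 (hr n)).ne'
    simp only [Function.comp_apply, log_pow]
    field_simp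
  have hbdd : IsBoundedUnder (· ≤ ·) atTop (norm ∘ fun n : ℕ => (n : ℝ) / r n) :=
    isBoundedUnder_of_eventually_le (a := κ) <| hrκ.mono fun n hn => by
      rwa [Function.comp_apply, Real.norm_of_nonneg (div_nonneg n.cast_nonneg (hr n).le)]
  refine (isBoundedUnder_le_mul_tendsto_zero hbdd hlog).congr fun n => ?_
  field_simp [(hr n).ne']

lemma IsCopulaDiagonal.lipschitzOnWith {n : ℕ} {δ : ℝ → ℝ} (hδ : IsCopulaDiagonal n δ) :
    LipschitzOnWith n δ (Icc 0 1) :=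
  LipschitzOnWith.of_dist_le_mul fun u hu v hv => by
    simpa [Real.dist_eq] using hδ.2.2.2.2 u hu v hv

lemma tendsto_sub_of_pow_ceil_tendsto {δ : ℕ → ℝ → ℝ} {r a : ℕ → ℝ} {u κ : ℝ}
    (hδ : ∀ n : ℕ, LipschitzOnWith n (δ n) (Icc 0 1)) (hu : u ∈ Ioc 0 1) (hκ : 0 < κ)
    (hr : ∀ n, 0 < r n) (hrκ : ∀ᶠ n : ℕ in atTop, (n : ℝ) / r n ≤ κ) (ha01 : ∀ n, a n ∈ Icc 0 1)
    (ha : Tendsto (fun n => a n ^ ⌈r n⌉₊) atTop (𝓝 u)) :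
    Tendsto (fun n => δ n (u ^ (1 / r n)) - δ n (a n)) atTop (𝓝 0) := by
  have hapos : ∀ᶠ n in atTop, 0 < a n := (ha.eventually (lt_mem_nhds hu.1)).mono fun n hn =>
    (ha01 n).1.lt_of_ne' (ne_zero_pow (Nat.ceil_pos.2 (hr n)).ne' hn.ne')
  refine squeeze_zero_norm' ?_ (by simpa using
    (tendsto_natCast_mul_log_div_sub_log hu.1.ne' hκ hr hrκ ha).abs)
  filter_upwards [hapos] with n hn
  have hup : u ^ (1 / r n) ∈ Icc 0 1 :=
    ⟨rpow_nonneg hu.1.le _, rpow_le_one hu.1.le hu.2 (one_div_pos.2 (hr n)).le⟩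
  rw [← dist_eq_norm]
  calc dist (δ n (u ^ (1 / r n))) (δ n (a n)) ≤ n * dist (u ^ (1 / r n)) (a n) :=
        (hδ n).dist_le_mul _ hup _ (ha01 n)
    _ ≤ n * |log u / r n - log (a n)| :=
        mul_le_mul_of_nonneg_left (abs_rpow_one_div_sub_le hu ⟨hn, (ha01 n).2⟩ (hr n).le)
          n.cast_nonneg

lemma GEVcdf_mem_Icc (ξ μ σ x : ℝ) : GEVcdf ξ μ σ x ∈ Icc 0 1 := by
  unfold GEVcdf
  split_ifs with hξ hx
  · exact ⟨(exp_pos _).le, exp_le_one_iff.2 (neg_nonpos.2 (exp_pos _).le)⟩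
  · exact ⟨(exp_pos _).le, exp_le_one_iff.2 (neg_nonpos.2 (rpow_nonneg hx.le _))⟩
  all_goals simp

lemma continuousAt_GEVcdf {ξ μ σ x : ℝ} (hx : 0 < 1 + ξ * (x - μ) / σ) :
    ContinuousAt (GEVcdf ξ μ σ) x := by
  by_cases hξ : ξ = 0
  · subst hξ
    have hH : GEVcdf 0 μ σ = fun y => exp (-exp (-(y - μ) / σ)) := by
      funext y; simp [GEVcdf]
    rw [hH]
    fun_prop
  · have hnhds : ∀ᶠ y in 𝓝 x, 0 < 1 + ξ * (y - μ) / σ :=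
      continuousAt_const.eventually_lt (by fun_prop) hx
    have hH : (fun y => exp (-(1 + ξ * (y - μ) / σ) ^ (-1 / ξ))) =ᶠ[𝓝 x] GEVcdf ξ μ σ :=
      hnhds.mono fun y hy => by simp only [GEVcdf, if_neg hξ, if_pos hy]
    have hbase : ContinuousAt (fun y => 1 + ξ * (y - μ) / σ) x := by fun_prop
    exact ((hbase.rpow_const (Or.inl hx.ne')).neg.rexp).congr hH

/-- The GEV quantile: with `t = -log u`, `x = μ + σ (t ^ (-ξ) - 1) / ξ`, resp. `μ - σ log t`
for `ξ = 0`. -/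
lemma exists_GEVcdf_eq (ξ μ : ℝ) {σ u : ℝ} (hσ : σ ≠ 0) (hu : u ∈ Ioo 0 1) :
    ∃ x, 0 < 1 + ξ * (x - μ) / σ ∧ GEVcdf ξ μ σ x = u := by
  set t := -log u
  have ht : 0 < t := neg_pos.2 (log_neg hu.1 hu.2)
  have hexp : exp (-t) = u := by simp [t, exp_log hu.1]
  by_cases hξ : ξ = 0
  · subst hξ
    refine ⟨μ - σ * log t, by simp, ?_⟩
    have harg : -(μ - σ * log t - μ) / σ = log t := by field_simp; ring
    simp only [GEVcdf, harg, exp_log ht, hexp, if_true]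
  · have hs : 0 < t ^ (-ξ) := rpow_pos_of_pos ht _
    have harg : 1 + ξ * (μ + σ * (t ^ (-ξ) - 1) / ξ - μ) / σ = t ^ (-ξ) := by
      field_simp; ring
    refine ⟨μ + σ * (t ^ (-ξ) - 1) / ξ, harg.symm ▸ hs, ?_⟩
    have hpow : (t ^ (-ξ)) ^ (-1 / ξ) = t := by
      rw [← rpow_mul ht.le, show -ξ * (-1 / ξ) = 1 by field_simp, rpow_one]
    simp only [GEVcdf, if_neg hξ, harg, if_pos hs, hpow, hexp]

end

theorem diagonal_power_distortion_convergence_necessity_general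
    (F H D : ℝ → ℝ) (cs ds : ℕ → ℝ) (δ : ℕ → ℝ → ℝ) (r : ℕ → ℝ)
    (hF : IsDistFun F)
    (hH : IsGEV H)
    (hMDA : ∀ x, Tendsto (fun n => F (cs n * x + ds n) ^ n) atTop (nhds (H x)))
    (hδ : ∀ n, IsCopulaDiagonal n (δ n))
    (hr : ∀ n, 0 < r n)
    (hrO : ∃ κ : ℝ, 0 < κ ∧ ∀ᶠ n : ℕ in atTop, (n : ℝ) / r n ≤ κ)
    (hD : IsDistFun01 D)
    (hconv : ∀ x, ContinuousAt (fun y => D (H y)) x →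
      Tendsto (fun n => δ n (F (cs (Nat.ceil (r n)) * x + ds (Nat.ceil (r n)))))
        atTop (nhds (D (H x)))) :
    (∀ u ∈ ({0, 1} : Set ℝ),
      Tendsto (fun n => δ n (u ^ (1 / r n))) atTop (nhds (D u))) ∧
    (∀ u ∈ Ioo (0:ℝ) 1, ContinuousWithinAt D (Icc 0 1) u →
      Tendsto (fun n => δ n (u ^ (1 / r n))) atTop (nhds (D u))) := by
  obtain ⟨ξ, μ, σ, hσ, rfl⟩ := hH
  obtain ⟨κ, hκ, hrκ⟩ := hrO
  refine ⟨?_, fun u hu hDu => ?_⟩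
  · have hzero : ∀ n, (0 : ℝ) ^ (1 / r n) = 0 := fun n =>
      Real.zero_rpow (one_div_pos.2 (hr n)).ne'
    rintro u (rfl | rfl)
    · simp only [hzero, fun n => (hδ n).1, hD.1, tendsto_const_nhds]
    · simp only [Real.one_rpow, fun n => (hδ n).2.1, hD.2.1, tendsto_const_nhds]
  obtain ⟨x, hx, rfl⟩ := exists_GEVcdf_eq ξ μ hσ.ne' hu
  have hDH : ContinuousAt (fun y => D (GEVcdf ξ μ σ y)) x :=
    (continuousWithinAt_univ _ _).1 <| hDu.comp (continuousAt_GEVcdf hx).continuousWithinAt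
      fun y _ => GEVcdf_mem_Icc ξ μ σ y
  have hpow := (hMDA x).comp (tendsto_nat_ceil_atTop.comp
    (tendsto_atTop_of_natCast_div_le hκ hr hrκ))
  simpa using (tendsto_sub_of_pow_ceil_tendsto (fun n => (hδ n).lipschitzOnWith)
    ⟨hu.1, hu.2.le⟩ hκ hr hrκ (fun n => hF.2.2.2.2 _) hpow).add (hconv x hDH)

/-- Theorem 2.x(ii): necessity of the convergence of the diagonal power distortion. -/
theorem diagonal_power_distortion_convergence_necessity
    (F H D : ℝ → ℝ) (cs ds : ℕ → ℝ) (δ : ℕ → ℝ → ℝ) (r : ℕ → ℝ)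
    (hF : IsDistFun F) (hFcont : Continuous F)
    (hH : IsGEV H) (hcs : ∀ n, 0 < cs n)
    (hMDA : ∀ x, Tendsto (fun n => F (cs n * x + ds n) ^ n) atTop (nhds (H x)))
    (hδ : ∀ n, IsCopulaDiagonal n (δ n))
    (hr : ∀ n, 0 < r n)
    (hrO : ∃ κ : ℝ, 0 < κ ∧ ∀ᶠ n : ℕ in atTop, (n : ℝ) / r n ≤ κ)
    (hD : IsDistFun01 D)
    (hconv : ∀ x, ContinuousAt (fun y => D (H y)) x →
      Tendsto (fun n => δ n (F (cs (Nat.ceil (r n)) * x + ds (Nat.ceil (r n)))))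
        atTop (nhds (D (H x)))) :
    (∀ u ∈ ({0, 1} : Set ℝ),
      Tendsto (fun n => δ n (u ^ (1 / r n))) atTop (nhds (D u))) ∧
    (∀ u ∈ Ioo (0:ℝ) 1, ContinuousWithinAt D (Icc 0 1) u →
      Tendsto (fun n => δ n (u ^ (1 / r n))) atTop (nhds (D u))) :=
  diagonal_power_distortion_convergence_necessity_general F H D cs ds δ r hF hH hMDA hδ hr hrO hD
    hconv
end

section
/- Let F be a continuous distribution function on ℝ with F ∈ MDA(H_{ξ,μ,σ}), where H_{ξ,μ,σ} is a GEV distribution function, with normalizing sequences (c*_n), c*_n > 0, and (d*_n). For each n ∈ ℕ let δ_n be an n-variate copula diagonal, and suppose there exists r : ℕ → (0,∞) with r_n → ∞ such that D_n^r(u) = δ_n(u^{1/r_n}) converges pointwise on [0,1] to a continuous function D. If there exist sequences (c_n), c_n > 0, and (d_n) and a nondegenerate distribution function G on ℝ such that δ_n(F(c_n x + d_n)) → G(x) as n → ∞ at every continuity point x of G, then there exist c > 0 and d ∈ ℝ such that G = D ∘ H_{ξ,μ̃,σ̃} with μ̃ = (μ − d)/c and σ̃ = σ/c. (Corollary: generalized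 Fisher–Tippett–Gnedenko theorem.) -/
open Filter Set Topology

/-!
Writing `δ n v = D_n^r (v ^ r n)` and running the maximum-domain-of-attraction limit along
`m = ⌊r n⌋` shows that `K n y = δ n (F (c*_m y + d*_m))` converges to `D (H y)`. The `K n` are
monotone and `D ∘ H` is continuous, so the convergence is continuous convergence. The hypothesis
says `K n (α n x + β n) → G x` with `α n = c n / c*_m`; since `G` is nondegenerate, the values of
these affine maps at two points stay in a compact interval, so along a subsequence they converge
to `x ↦ c x + d`. Hence `G = D ∘ H (c · + d)` at continuity points of `G`, and everywhere by right
continuity; `c > 0` because `G` is not constant. Finally `H (c x + d)` is the GEV distribution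
function with location `(μ - d) / c` and scale `σ / c`.
-/

namespace GEVcdf

theorem mem_Icc (ξ μ σ x : ℝ) : GEVcdf ξ μ σ x ∈ Icc (0 : ℝ) 1 := by
  unfold GEVcdf
  split_ifs
  · exact ⟨(Real.exp_pos _).le, Real.exp_le_one_iff.2 (neg_nonpos.2 (Real.exp_pos _).le)⟩
  · exact ⟨(Real.exp_pos _).le,
      Real.exp_le_one_iff.2 (neg_nonpos.2 (Real.rpow_nonneg (by linarith) _))⟩
  · exact ⟨le_rfl, zero_le_one⟩
  · exact ⟨zero_le_one, le_rfl⟩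

-- Clamping `1 + ξ (x - μ) / σ` at `0` turns both branches `ξ ≠ 0` into compositions of
-- continuous functions.
theorem eq_of_neg {ξ : ℝ} (μ σ : ℝ) (hξ : ξ < 0) :
    GEVcdf ξ μ σ = fun x => Real.exp (-max 0 (1 + ξ * (x - μ) / σ) ^ (-1 / ξ)) := by
  have hp : (-1 / ξ) ≠ 0 := div_ne_zero (by norm_num) hξ.ne
  ext x
  by_cases ht : 0 < 1 + ξ * (x - μ) / σ
  · simp [GEVcdf, hξ.ne, ht, max_eq_right ht.le]
  · simp [GEVcdf, hξ.ne, ht, hξ.le, max_eq_left (not_lt.1 ht), Real.zero_rpow hp]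

theorem eq_of_pos {ξ : ℝ} (μ σ : ℝ) (hξ : 0 < ξ) :
    GEVcdf ξ μ σ = fun x => expNegInvGlue (max 0 (1 + ξ * (x - μ) / σ) ^ (1 / ξ)) := by
  ext x
  by_cases ht : 0 < 1 + ξ * (x - μ) / σ
  · rw [max_eq_right ht.le, expNegInvGlue, if_neg (not_le.2 (Real.rpow_pos_of_pos ht _)),
      ← Real.rpow_neg_one, ← Real.rpow_mul ht.le]
    simp [GEVcdf, hξ.ne', ht, neg_div]
  · simp [GEVcdf, hξ.ne', ht, hξ, max_eq_left (not_lt.1 ht)]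

theorem eq_of_zero (μ σ : ℝ) :
    GEVcdf 0 μ σ = fun x => Real.exp (-Real.exp (-(x - μ) / σ)) := by
  ext x; simp [GEVcdf]

theorem continuous (ξ μ σ : ℝ) : Continuous (GEVcdf ξ μ σ) := by
  rcases lt_trichotomy ξ 0 with hξ | rfl | hξ
  · rw [eq_of_neg μ σ hξ]
    exact ((Real.continuous_rpow_const (div_pos_of_neg_of_neg (by norm_num) hξ).le).comp
      (by fun_prop)).neg.rexp
  · rw [eq_of_zero]; fun_prop
  · rw [eq_of_pos μ σ hξ]
    exact (expNegInvGlue.contDiff (n := 0)).continuous.comp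
      ((Real.continuous_rpow_const (one_div_pos.2 hξ).le).comp (by fun_prop))

variable {ξ μ σ : ℝ}

theorem tendsto_atBot (hσ : 0 < σ) : Tendsto (GEVcdf ξ μ σ) atBot (𝓝 0) := by
  rcases lt_trichotomy ξ 0 with hξ | rfl | hξ
  · have ht : Tendsto (fun x => 1 + ξ * (x - μ) / σ) atBot atTop :=
      tendsto_atTop_add_const_left _ 1 (((tendsto_id.atBot_add (tendsto_const_nhds (x := -μ))
        ).const_mul_atBot_of_neg hξ).atTop_div_const hσ)
    rw [eq_of_neg μ σ hξ]
    exact Real.tendsto_exp_atBot.comp (tendsto_neg_atTop_atBot.comp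
      ((tendsto_rpow_atTop (div_pos_of_neg_of_neg (by norm_num) hξ)).comp
        (tendsto_atTop_mono (fun _ => le_max_right 0 _) ht)))
  · rw [eq_of_zero]
    exact Real.tendsto_exp_atBot.comp (tendsto_neg_atTop_atBot.comp (Real.tendsto_exp_atTop.comp
      ((tendsto_neg_atBot_atTop.comp (tendsto_id.atBot_add (tendsto_const_nhds (x := -μ)))
        ).atTop_div_const hσ)))
  · have ht : Tendsto (fun x => 1 + ξ * (x - μ) / σ) atBot atBot :=
      tendsto_atBot_add_const_left _ 1 (((tendsto_id.atBot_add (tendsto_const_nhds (x := -μ))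
        ).const_mul_atBot hξ).atBot_div_const hσ)
    rw [eq_of_pos μ σ hξ]
    refine tendsto_const_nhds.congr' ?_
    filter_upwards [ht.eventually (eventually_le_atBot 0)] with x hx
    rw [max_eq_left hx, Real.zero_rpow (one_div_ne_zero hξ.ne'), expNegInvGlue.zero]

theorem tendsto_atTop (hσ : 0 < σ) : Tendsto (GEVcdf ξ μ σ) atTop (𝓝 1) := by
  have hexp : Tendsto (fun s => Real.exp (-s)) (𝓝 0) (𝓝 1) := by
    simpa using continuous_neg.rexp.tendsto (0 : ℝ)
  rcases lt_trichotomy ξ 0 with hξ | rfl | hξ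
  · have ht : Tendsto (fun x => 1 + ξ * (x - μ) / σ) atTop atBot :=
      tendsto_atBot_add_const_left _ 1 (((tendsto_id.atTop_add (tendsto_const_nhds (x := -μ))
        ).const_mul_atTop_of_neg hξ).atBot_div_const hσ)
    rw [eq_of_neg μ σ hξ]
    refine tendsto_const_nhds.congr' ?_
    filter_upwards [ht.eventually (eventually_le_atBot 0)] with x hx
    rw [max_eq_left hx, Real.zero_rpow (div_ne_zero (by norm_num) hξ.ne), neg_zero, Real.exp_zero]
  · rw [eq_of_zero]
    exact hexp.comp (Real.tendsto_exp_atBot.comp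
      ((tendsto_neg_atTop_atBot.comp (tendsto_id.atTop_add (tendsto_const_nhds (x := -μ)))
        ).atBot_div_const hσ))
  · have ht : Tendsto (fun x => 1 + ξ * (x - μ) / σ) atTop atTop :=
      tendsto_atTop_add_const_left _ 1 (((tendsto_id.atTop_add (tendsto_const_nhds (x := -μ))
        ).const_mul_atTop hξ).atTop_div_const hσ)
    have hu : Tendsto (fun x => max 0 (1 + ξ * (x - μ) / σ) ^ (1 / ξ)) atTop atTop :=
      (tendsto_rpow_atTop (one_div_pos.2 hξ)).comp
        (tendsto_atTop_mono (fun _ => le_max_right 0 _) ht)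
    rw [eq_of_pos μ σ hξ]
    refine (hexp.comp (tendsto_inv_atTop_zero.comp hu)).congr' ?_
    filter_upwards [hu.eventually_gt_atTop 0] with x hx
    rw [Function.comp_apply, Function.comp_apply, expNegInvGlue, if_neg (not_le.2 hx)]

theorem comp_affine (ξ μ : ℝ) {σ c : ℝ} (d : ℝ) (hc : 0 < c) (x : ℝ) :
    GEVcdf ξ μ σ (c * x + d) = GEVcdf ξ ((μ - d) / c) (σ / c) x := by
  have h1 : ξ * (x - (μ - d) / c) / (σ / c) = ξ * (c * x + d - μ) / σ := by
    field_simp; ring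
  have h2 : -(x - (μ - d) / c) / (σ / c) = -(c * x + d - μ) / σ := by
    field_simp; ring
  simp only [GEVcdf, h1, h2]

theorem tendsto_comp_atBot {D : ℝ → ℝ} (hD : ContinuousOn D (Icc 0 1)) (hσ : 0 < σ) :
    Tendsto (D ∘ GEVcdf ξ μ σ) atBot (𝓝 (D 0)) :=
  (hD 0 ⟨le_rfl, zero_le_one⟩).tendsto.comp
    (tendsto_nhdsWithin_iff.2 ⟨tendsto_atBot hσ, .of_forall (mem_Icc ξ μ σ)⟩)

theorem tendsto_comp_atTop {D : ℝ → ℝ} (hD : ContinuousOn D (Icc 0 1)) (hσ : 0 < σ) :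
    Tendsto (D ∘ GEVcdf ξ μ σ) atTop (𝓝 (D 1)) :=
  (hD 1 ⟨zero_le_one, le_rfl⟩).tendsto.comp
    (tendsto_nhdsWithin_iff.2 ⟨tendsto_atTop hσ, .of_forall (mem_Icc ξ μ σ)⟩)

end GEVcdf

theorem tendsto_apply_of_monotone {ι α β : Type*} [LinearOrder α] [TopologicalSpace α]
    [OrderTopology α] [DenselyOrdered α] [NoMinOrder α] [NoMaxOrder α]
    [LinearOrder β] [TopologicalSpace β] [OrderTopology β] {l : Filter ι} {f : ι → α → β}
    {g : α → β} {w : ι → α} {x : α} (hf : ∀ i, Monotone (f i))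
    (hfg : ∀ y, Tendsto (fun i => f i y) l (𝓝 (g y))) (hg : ContinuousAt g x)
    (hw : Tendsto w l (𝓝 x)) :
    Tendsto (fun i => f i (w i)) l (𝓝 (g x)) := by
  refine tendsto_order.2 ⟨fun b hb => ?_, fun b hb => ?_⟩
  · obtain ⟨y, hyx, hby⟩ := (hg.eventually (lt_mem_nhds hb)).exists_lt
    filter_upwards [(hfg y).eventually (lt_mem_nhds hby), hw.eventually (lt_mem_nhds hyx)]
      with i hi hwi
    exact hi.trans_le (hf i hwi.le)
  · obtain ⟨y, hxy, hby⟩ := (hg.eventually (gt_mem_nhds hb)).exists_gt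
    filter_upwards [(hfg y).eventually (gt_mem_nhds hby), hw.eventually (gt_mem_nhds hxy)]
      with i hi hwi
    exact (hf i hwi.le).trans_lt hi

theorem tendsto_rpow_of_tendsto_pow {ι : Type*} {l : Filter ι} {u : ℕ → ℝ} {L : ℝ} {r : ι → ℝ}
    (hu : ∀ m, 0 ≤ u m) (huL : Tendsto (fun m => u m ^ m) atTop (𝓝 L))
    (hr : Tendsto r l atTop) :
    Tendsto (fun i => u ⌊r i⌋₊ ^ r i) l (𝓝 L) := by
  have hfloor : Tendsto (fun i => ⌊r i⌋₊) l atTop := tendsto_nat_floor_atTop.comp hr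
  have hratio : Tendsto (fun i => r i / ⌊r i⌋₊) l (𝓝 1) := by
    simpa using (tendsto_nat_floor_div_atTop.comp hr).inv₀ one_ne_zero
  have h := (Real.continuousAt_rpow (L, 1) (Or.inr one_pos)).tendsto.comp
    ((huL.comp hfloor).prodMk_nhds hratio)
  rw [Real.rpow_one] at h
  refine h.congr' ?_
  filter_upwards [hfloor.eventually_ne_atTop 0] with i hi
  have hi' : (⌊r i⌋₊ : ℝ) ≠ 0 := Nat.cast_ne_zero.2 hi
  simp [← Real.rpow_natCast, ← Real.rpow_mul (hu _), mul_div_cancel₀ (r i) hi']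

theorem tendsto_apply_of_tendsto_rpow {ι : Type*} {l : Filter ι} [l.NeBot] {δ : ι → ℝ → ℝ}
    {r : ι → ℝ} {D : ℝ → ℝ} (hδ : ∀ i, MonotoneOn (δ i) (Icc 0 1)) (hr : ∀ i, 0 < r i)
    (hD : ContinuousOn D (Icc 0 1))
    (hδD : ∀ u ∈ Icc (0 : ℝ) 1, Tendsto (fun i => δ i (u ^ (1 / r i))) l (𝓝 (D u)))
    {v : ι → ℝ} {L : ℝ} (hv : ∀ i, v i ∈ Icc (0 : ℝ) 1)
    (hL : Tendsto (fun i => v i ^ r i) l (𝓝 L)) :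
    Tendsto (fun i => δ i (v i)) l (𝓝 (D L)) := by
  set P : ℝ → ℝ := fun u => projIcc 0 1 zero_le_one u
  have hP : ∀ u, P u ∈ Icc (0 : ℝ) 1 := fun u => (projIcc 0 1 zero_le_one u).2
  have hPr : ∀ i u, P u ^ (1 / r i) ∈ Icc (0 : ℝ) 1 := fun i u =>
    ⟨Real.rpow_nonneg (hP u).1 _, Real.rpow_le_one (hP u).1 (hP u).2 (by have := hr i; positivity)⟩
  have hmono : ∀ i, Monotone fun u => δ i (P u ^ (1 / r i)) := fun i u u' huu' =>
    hδ i (hPr i u) (hPr i u') (Real.rpow_le_rpow (hP u).1 (monotone_projIcc _ huu')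
      (by have := hr i; positivity))
  have hvr : ∀ i, v i ^ r i ∈ Icc (0 : ℝ) 1 := fun i =>
    ⟨Real.rpow_nonneg (hv i).1 _, Real.rpow_le_one (hv i).1 (hv i).2 (hr i).le⟩
  have hLmem : L ∈ Icc (0 : ℝ) 1 := isClosed_Icc.mem_of_tendsto hL (Eventually.of_forall hvr)
  have h := tendsto_apply_of_monotone hmono (fun u => hδD _ (hP u))
    (hD.comp_continuous (continuous_subtype_val.comp continuous_projIcc) hP).continuousAt hL
  simp only [P, projIcc_of_mem _ hLmem] at h
  refine h.congr fun i => ?_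
  rw [projIcc_of_mem _ (hvr i), one_div, Real.rpow_rpow_inv (hv i).1 (hr i).ne']

theorem eq_zero_and_eq_one_of_tendsto_diagonal_rpow {δ : ℕ → ℝ → ℝ} {r : ℕ → ℝ} {D : ℝ → ℝ}
    (hδ : ∀ n, IsCopulaDiagonal n (δ n)) (hr : ∀ n, 0 < r n)
    (hδD : ∀ u ∈ Icc (0 : ℝ) 1, Tendsto (fun n => δ n (u ^ (1 / r n))) atTop (𝓝 (D u))) :
    D 0 = 0 ∧ D 1 = 1 :=
  ⟨tendsto_nhds_unique (hδD 0 ⟨le_rfl, zero_le_one⟩) (tendsto_const_nhds.congr fun n => by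
      rw [Real.zero_rpow (one_div_ne_zero (hr n).ne'), (hδ n).1]),
    tendsto_nhds_unique (hδD 1 ⟨zero_le_one, le_rfl⟩)
      (tendsto_const_nhds.congr fun n => by rw [Real.one_rpow, (hδ n).2.1])⟩

theorem Monotone.dense_setOf_continuousAt {f : ℝ → ℝ} (hf : Monotone f) :
    Dense {x | ContinuousAt f x} := by
  simpa [compl_ofPred] using hf.countable_not_continuousAt.dense_compl ℝ

theorem Dense.eq_of_continuousWithinAt_Ici {α β : Type*} [LinearOrder α] [TopologicalSpace α]
    [OrderTopology α] [DenselyOrdered α] [NoMaxOrder α] [TopologicalSpace β] [T2Space β]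
    {S : Set α} (hS : Dense S) {f g : α → β} (hf : ∀ x, ContinuousWithinAt f (Ici x) x)
    (hg : ∀ x, ContinuousWithinAt g (Ici x) x) (hfg : EqOn f g S) : f = g := by
  funext x
  have hx : x ∈ closure (Ioi x ∩ S) :=
    closure_minimal (hS.open_subset_closure_inter (isOpen_Ioi (a := x))) isClosed_closure
      (by rw [closure_Ioi]; exact mem_Ici.2 le_rfl)
  have : (𝓝[Ioi x ∩ S] x).NeBot := mem_closure_iff_nhdsWithin_neBot.1 hx
  have hsub : Ioi x ∩ S ⊆ Ici x := fun y hy => le_of_lt hy.1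
  exact tendsto_nhds_unique_of_eventuallyEq ((hf x).mono hsub) ((hg x).mono hsub)
    (eventually_nhdsWithin_of_forall fun y hy => hfg hy.2)

namespace IsDistFun

variable {G : ℝ → ℝ}

theorem exists_mem_Ioo (hG : IsDistFun G) (hnd : ¬ IsDegenerateDF G) : ∃ z, G z ∈ Ioo 0 1 := by
  obtain ⟨hmono, hrc, hbot, htop, hIcc⟩ := hG
  by_contra! h
  have h01 : ∀ x, G x ≠ 1 → G x = 0 := fun x hx =>
    le_antisymm (not_lt.1 fun hpos => h x ⟨hpos, lt_of_le_of_ne (hIcc x).2 hx⟩) (hIcc x).1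
  set S := {x | G x = 1}
  have hS : S.Nonempty := by
    obtain ⟨x, hx⟩ := (htop.eventually (lt_mem_nhds one_pos)).exists
    exact ⟨x, by_contra fun h1 => by simp [h01 x h1] at hx⟩
  have hbdd : BddBelow S := by
    obtain ⟨x₀, hx₀⟩ := (hbot.eventually (gt_mem_nhds one_pos)).exists
    exact ⟨x₀, fun s hs => (hmono.reflect_lt (hx₀.trans_eq hs.symm)).le⟩
  have hgt : ∀ y, sInf S < y → G y = 1 := fun y hy => by
    obtain ⟨s, hs, hsy⟩ := exists_lt_of_csInf_lt hS hy
    exact le_antisymm (hIcc y).2 (hs ▸ hmono hsy.le)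
  refine hnd ⟨sInf S, fun x => ?_⟩
  split_ifs with hx
  · rcases hx.eq_or_lt with rfl | hx
    · refine tendsto_nhds_unique ((hrc _).mono Ioi_subset_Ici_self) (tendsto_const_nhds.congr' ?_)
      filter_upwards [self_mem_nhdsWithin] with y hy using (hgt y hy).symm
    · exact hgt x hx
  · exact h01 x fun h1 => hx (csInf_le hbdd h1)

theorem exists_continuousAt_lt (hG : IsDistFun G) (hnd : ¬ IsDegenerateDF G) :
    ∃ y₁ y₂, y₁ < y₂ ∧ ContinuousAt G y₁ ∧ ContinuousAt G y₂ ∧ 0 < G y₁ ∧ G y₂ < 1 := by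
  obtain ⟨z, hz0, hz1⟩ := hG.exists_mem_Ioo hnd
  obtain ⟨b, hzb, hb⟩ :=
    mem_nhdsGE_iff_exists_Ico_subset.1 ((hG.2.1 z).eventually (gt_mem_nhds hz1))
  have hdense := hG.1.dense_setOf_continuousAt
  obtain ⟨y₁, hy₁, hzy₁, hy₁b⟩ := hdense.exists_between hzb
  obtain ⟨y₂, hy₂, hy₁₂, hy₂b⟩ := hdense.exists_between hy₁b
  exact ⟨y₁, y₂, hy₁₂, hy₁, hy₂, hz0.trans_le (hG.1 hzy₁.le), hb ⟨(hzy₁.trans hy₁₂).le, hy₂b⟩⟩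

end IsDistFun

theorem exists_subseq_tendsto_affine {α β : ℕ → ℝ} {y₁ y₂ a b : ℝ} (hy : y₁ < y₂)
    (hα : ∀ n, 0 < α n) (h₁ : ∀ᶠ n in atTop, α n * y₁ + β n ∈ Icc a b)
    (h₂ : ∀ᶠ n in atTop, α n * y₂ + β n ∈ Icc a b) :
    ∃ c d : ℝ, 0 ≤ c ∧ ∃ φ : ℕ → ℕ, StrictMono φ ∧
      ∀ x, Tendsto (fun k => α (φ k) * x + β (φ k)) atTop (𝓝 (c * x + d)) := by
  obtain ⟨⟨p₁, p₂⟩, -, φ, hφ, hp⟩ := (isCompact_Icc.prod isCompact_Icc).tendsto_subseq'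
    (x := fun n => (α n * y₁ + β n, α n * y₂ + β n)) (h₁.and h₂).frequently
  have hslope : ∀ n, α n = ((α n * y₂ + β n) - (α n * y₁ + β n)) / (y₂ - y₁) := fun n => by
    field_simp [(sub_pos.2 hy).ne']; ring
  set c := (p₂ - p₁) / (y₂ - y₁)
  have hαc : Tendsto (fun k => α (φ k)) atTop (𝓝 c) := by
    refine ((hp.snd_nhds.sub hp.fst_nhds).div_const (y₂ - y₁)).congr fun k => ?_
    exact (hslope (φ k)).symm
  have hβd : Tendsto (fun k => β (φ k)) atTop (𝓝 (p₁ - c * y₁)) :=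
    (hp.fst_nhds.sub (hαc.mul_const y₁)).congr fun k => by simp
  exact ⟨c, p₁ - c * y₁, ge_of_tendsto' hαc fun k => (hα _).le, φ, hφ,
    fun x => (hαc.mul_const x).add hβd⟩

theorem exists_eq_comp_affine_of_tendsto {K : ℕ → ℝ → ℝ} {Φ G : ℝ → ℝ} {α β : ℕ → ℝ}
    (hK : ∀ n, Monotone (K n)) (hKΦ : ∀ y, Tendsto (fun n => K n y) atTop (𝓝 (Φ y)))
    (hΦ : Continuous Φ) (hΦbot : Tendsto Φ atBot (𝓝 0)) (hΦtop : Tendsto Φ atTop (𝓝 1))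
    (hα : ∀ n, 0 < α n) (hG : IsDistFun G) (hnd : ¬ IsDegenerateDF G)
    (hGK : ∀ x, ContinuousAt G x → Tendsto (fun n => K n (α n * x + β n)) atTop (𝓝 (G x))) :
    ∃ c d : ℝ, 0 < c ∧ ∀ x, G x = Φ (c * x + d) := by
  obtain ⟨y₁, y₂, hy, hy₁, hy₂, hGy₁, hGy₂⟩ := hG.exists_continuousAt_lt hnd
  obtain ⟨a, ha⟩ := (hΦbot.eventually (gt_mem_nhds hGy₁)).exists
  obtain ⟨b, hb⟩ := (hΦtop.eventually (lt_mem_nhds hGy₂)).exists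
  have hlow : ∀ᶠ n in atTop, a < α n * y₁ + β n := by
    filter_upwards [(hKΦ a).eventually_lt (hGK y₁ hy₁) ha] with n hn using (hK n).reflect_lt hn
  have hhigh : ∀ᶠ n in atTop, α n * y₂ + β n < b := by
    filter_upwards [(hGK y₂ hy₂).eventually_lt (hKΦ b) hb] with n hn using (hK n).reflect_lt hn
  have hy₁₂ : ∀ n, α n * y₁ + β n ≤ α n * y₂ + β n := fun n => by nlinarith [hα n]
  obtain ⟨c, d, hc, φ, hφ, hlim⟩ := exists_subseq_tendsto_affine hy hα
    (by filter_upwards [hlow, hhigh] with n h₁ h₂ using ⟨h₁.le, (hy₁₂ n).trans h₂.le⟩)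
    (by filter_upwards [hlow, hhigh] with n h₁ h₂ using ⟨h₁.le.trans (hy₁₂ n), h₂.le⟩)
  have hGΦ : ∀ x, ContinuousAt G x → G x = Φ (c * x + d) := fun x hx =>
    tendsto_nhds_unique ((hGK x hx).comp hφ.tendsto_atTop)
      (tendsto_apply_of_monotone (fun k => hK (φ k)) (fun y => (hKΦ y).comp hφ.tendsto_atTop)
        hΦ.continuousAt (hlim x))
  have hdense := hG.1.dense_setOf_continuousAt
  have hcpos : 0 < c := by
    refine hc.lt_of_ne fun hc0 => ?_
    -- with `c = 0`, `G` would be constant on its continuity points, which reach down to `-∞`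
    obtain ⟨x₀, hx₀⟩ := eventually_atBot.1 (hG.2.2.1.eventually (gt_mem_nhds hGy₁))
    obtain ⟨x, hx, hxx₀⟩ := hdense.exists_lt x₀
    have := hx₀ x hxx₀.le
    rw [hGΦ x hx, hGΦ y₁ hy₁, ← hc0, zero_mul, zero_mul] at this
    exact this.false
  exact ⟨c, d, hcpos, congrFun (hdense.eq_of_continuousWithinAt_Ici hG.2.1
    (fun x => (hΦ.comp (by fun_prop)).continuousWithinAt) hGΦ)⟩

theorem generalized_FTG_corollary_general
    (F D G : ℝ → ℝ) (ξ μ σ : ℝ) (hσ : 0 < σ)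
    (cs0 ds0 cs ds : ℕ → ℝ) (δ : ℕ → ℝ → ℝ) (r : ℕ → ℝ)
    (hF : IsDistFun F)
    (hcs0 : ∀ n, 0 < cs0 n)
    (hMDA : ∀ x, Tendsto (fun n => F (cs0 n * x + ds0 n) ^ n) atTop
      (nhds (GEVcdf ξ μ σ x)))
    (hδ : ∀ n, IsCopulaDiagonal n (δ n))
    (hr : ∀ n, 0 < r n) (hrtop : Tendsto r atTop atTop)
    (hDcont : ContinuousOn D (Icc 0 1))
    (hconv : ∀ u ∈ Icc (0:ℝ) 1,
      Tendsto (fun n => δ n (u ^ (1 / r n))) atTop (nhds (D u)))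
    (hcs : ∀ n, 0 < cs n)
    (hG : IsDistFun G) (hGnd : ¬ IsDegenerateDF G)
    (hGconv : ∀ x, ContinuousAt G x →
      Tendsto (fun n => δ n (F (cs n * x + ds n))) atTop (nhds (G x))) :
    ∃ c d : ℝ, 0 < c ∧ ∀ x, G x = D (GEVcdf ξ ((μ - d) / c) (σ / c) x) := by
  obtain ⟨hFmono, -, -, -, hFIcc⟩ := hF
  obtain ⟨hD0, hD1⟩ := eq_zero_and_eq_one_of_tendsto_diagonal_rpow hδ hr hconv
  have hδmono : ∀ n, MonotoneOn (δ n) (Icc 0 1) := fun n => (hδ n).2.2.1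
  -- rescale along `m = ⌊r n⌋`, so that `F (a n * y + b n) ^ r n → GEVcdf ξ μ σ y`
  set a : ℕ → ℝ := fun n => cs0 ⌊r n⌋₊
  set b : ℕ → ℝ := fun n => ds0 ⌊r n⌋₊
  have ha : ∀ n, 0 < a n := fun n => hcs0 _
  have hK : ∀ n, Monotone fun y => δ n (F (a n * y + b n)) := fun n y y' hyy' =>
    hδmono n (hFIcc _) (hFIcc _) (hFmono (by have := ha n; gcongr))
  have hKΦ : ∀ y, Tendsto (fun n => δ n (F (a n * y + b n))) atTop
      (𝓝 ((D ∘ GEVcdf ξ μ σ) y)) := fun y =>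
    tendsto_apply_of_tendsto_rpow hδmono hr hDcont hconv (fun n => hFIcc _)
      (tendsto_rpow_of_tendsto_pow (fun m => (hFIcc _).1) (hMDA y) hrtop)
  obtain ⟨c, d, hc, hGDH⟩ := exists_eq_comp_affine_of_tendsto hK hKΦ
    (hDcont.comp_continuous (GEVcdf.continuous ξ μ σ) (GEVcdf.mem_Icc ξ μ σ))
    (hD0 ▸ GEVcdf.tendsto_comp_atBot hDcont hσ) (hD1 ▸ GEVcdf.tendsto_comp_atTop hDcont hσ)
    (α := fun n => cs n / a n) (fun n => div_pos (hcs n) (ha n))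
    (β := fun n => (ds n - b n) / a n) hG hGnd
    fun x hx => (hGconv x hx).congr fun n => by
      congr 2
      field_simp [(ha n).ne']
      ring
  exact ⟨c, d, hc, fun x => by rw [hGDH, Function.comp_apply, GEVcdf.comp_affine ξ μ d hc]⟩

/-- Corollary: generalized Fisher–Tippett–Gnedenko theorem. -/
theorem generalized_FTG_corollary
    (F D G : ℝ → ℝ) (ξ μ σ : ℝ) (hσ : 0 < σ)
    (cs0 ds0 cs ds : ℕ → ℝ) (δ : ℕ → ℝ → ℝ) (r : ℕ → ℝ)
    (hF : IsDistFun F) (hFcont : Continuous F)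
    (hcs0 : ∀ n, 0 < cs0 n)
    (hMDA : ∀ x, Tendsto (fun n => F (cs0 n * x + ds0 n) ^ n) atTop
      (nhds (GEVcdf ξ μ σ x)))
    (hδ : ∀ n, IsCopulaDiagonal n (δ n))
    (hr : ∀ n, 0 < r n) (hrtop : Tendsto r atTop atTop)
    (hDcont : ContinuousOn D (Icc 0 1))
    (hconv : ∀ u ∈ Icc (0:ℝ) 1,
      Tendsto (fun n => δ n (u ^ (1 / r n))) atTop (nhds (D u)))
    (hcs : ∀ n, 0 < cs n)
    (hG : IsDistFun G) (hGnd : ¬ IsDegenerateDF G)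
    (hGconv : ∀ x, ContinuousAt G x →
      Tendsto (fun n => δ n (F (cs n * x + ds n))) atTop (nhds (G x))) :
    ∃ c d : ℝ, 0 < c ∧ ∀ x, G x = D (GEVcdf ξ ((μ - d) / c) (σ / c) x) :=
  generalized_FTG_corollary_general F D G ξ μ σ hσ cs0 ds0 cs ds δ r hF hcs0 hMDA hδ hr hrtop hDcont
    hconv hcs hG hGnd hGconv
end

section
/- Let ψ be an Archimedean generator, let (η_n) be a sequence of positive reals with η_n → ∞ as n → ∞, assume 1 − ψ(1/·) is regularly varying at ∞ with index −ρ for some ρ ∈ (0,1], and define the rate r_n = 1/(1 − ψ(1/η_n)). Let δ_n : [0,1] → [0,1] be the Archimax diagonal δ_n(u) = ψ(η_n ψ^{−1}(u)) for u ∈ (0,1], δ_n(0) = 0. Then for every u ∈ [0,1], the diagonal power distortion satisfies D_n^r(u) = ψ(η_n ψ^{−1}(u^{1/r_n})) → D(u) := ψ((−log u)^{1/ρ}) as n → ∞ (with D(0) = 0 and D(1) = 1). If moreover F is a continuous distribution function on ℝ with F ∈ MDA(H) for a GEV distribution function H, with normalizing sequences (c*_n), c*_n > 0, and (d*_n), then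 for every x ∈ ℝ, δ_n(F(c*_{⌈r_n⌉} x + d*_{⌈r_n⌉})) → D(H(x)) as n → ∞. (Theorem on the limiting distortion for meta-Archimax sequences.) -/
open Filter Set Topology

/-!
With `r n = 1 / (1 - ψ (1 / η n))`, regular variation gives `r n * (1 - ψ (b / η n)) → b ^ ρ`
for every `b > 0`. So if `r n * (1 - q n) → L`, comparing `q n` with `ψ (b / η n)` and inverting
`ψ` shows `η n * ψ⁻¹ (q n) → L ^ (1 / ρ)`, hence `δ n (q n) → ψ (L ^ (1 / ρ))`; if instead
`r n * (1 - q n) → ∞`, then `δ n (q n) → 0`. Both parts of the theorem concern sequences with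
`q n ^ a n → h` and `a n / r n → 1` (`a = r` with `q n = u ^ (1 / r n)`, resp. `a n = ⌈r n⌉`),
and since `(1 - K / a) ^ a → exp (-K)`, these satisfy `a n * (1 - q n) → -log h`, which is `∞`
when `h = 0`.
-/

def IsRegularlyVarying (f : ℝ → ℝ) (α : ℝ) : Prop :=
  ∀ lam : ℝ, 0 < lam → Tendsto (fun t => f (lam * t) / f t) atTop (𝓝 (lam ^ α))

section PowerLimits

variable {a p : ℕ → ℝ} {h : ℝ}

theorem eventually_lt_mul_one_sub_of_tendsto_rpow (ha : Tendsto a atTop atTop)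
    (hpow : Tendsto (fun n => p n ^ a n) atTop (𝓝 h)) {K : ℝ} (hK : h < Real.exp (-K)) :
    ∀ᶠ n in atTop, K < a n * (1 - p n) := by
  have hexp := (Real.tendsto_one_add_div_rpow_exp (-K)).comp ha
  filter_upwards [hpow.eventually_lt hexp hK, ha.eventually_gt_atTop (max K 0)] with n hlt haK
  have ha0 : 0 < a n := (le_max_right _ _).trans_lt haK
  have hKa : K < a n := (le_max_left _ _).trans_lt haK
  by_contra! hle
  have hbase : 1 + -K / a n ≤ p n := by
    rw [neg_div, ← sub_eq_add_neg, sub_le_comm, le_div_iff₀ ha0]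
    linarith
  have hbase0 : 0 ≤ 1 + -K / a n := by
    rw [neg_div, ← sub_eq_add_neg, sub_nonneg, div_le_one ha0]
    exact hKa.le
  exact hlt.not_ge (Real.rpow_le_rpow hbase0 hbase ha0.le)

theorem eventually_mul_one_sub_lt_of_tendsto_rpow (ha : Tendsto a atTop atTop)
    (hp : ∀ n, 0 ≤ p n) (hpow : Tendsto (fun n => p n ^ a n) atTop (𝓝 h)) {K : ℝ}
    (hK : Real.exp (-K) < h) :
    ∀ᶠ n in atTop, a n * (1 - p n) < K := by
  have hexp := (Real.tendsto_one_add_div_rpow_exp (-K)).comp ha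
  filter_upwards [hexp.eventually_lt hpow hK, ha.eventually_gt_atTop 0] with n hlt ha0
  by_contra! hle
  have hbase : p n ≤ 1 + -K / a n := by
    rw [neg_div, ← sub_eq_add_neg, le_sub_comm, div_le_iff₀ ha0]
    linarith
  exact hlt.not_ge (Real.rpow_le_rpow (hp n) hbase ha0.le)

theorem tendsto_mul_one_sub_of_tendsto_rpow (ha : Tendsto a atTop atTop) (hp : ∀ n, 0 ≤ p n)
    (hpow : Tendsto (fun n => p n ^ a n) atTop (𝓝 h)) (hh : 0 < h) :
    Tendsto (fun n => a n * (1 - p n)) atTop (𝓝 (-Real.log h)) := by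
  refine tendsto_order.2 ⟨fun K hK => ?_, fun K hK => ?_⟩
  · exact eventually_lt_mul_one_sub_of_tendsto_rpow ha hpow
      ((Real.log_lt_iff_lt_exp hh).1 (by linarith))
  · exact eventually_mul_one_sub_lt_of_tendsto_rpow ha hp hpow
      ((Real.lt_log_iff_exp_lt hh).1 (by linarith))

theorem tendsto_mul_one_sub_atTop_of_tendsto_rpow_zero (ha : Tendsto a atTop atTop)
    (hpow : Tendsto (fun n => p n ^ a n) atTop (𝓝 0)) :
    Tendsto (fun n => a n * (1 - p n)) atTop atTop :=
  tendsto_atTop.2 fun K =>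
    (eventually_lt_mul_one_sub_of_tendsto_rpow ha hpow (Real.exp_pos (-K))).mono
      fun _ => le_of_lt

end PowerLimits

namespace IsArchimedeanGenerator

variable {ψ ψinv : ℝ → ℝ}

theorem nonneg (hψ : IsArchimedeanGenerator ψ) {t : ℝ} (ht : 0 ≤ t) : 0 ≤ ψ t :=
  (hψ.2.2.1 t ht).1

theorem lt_one (hψ : IsArchimedeanGenerator ψ) {t : ℝ} (ht : 0 < t) : ψ t < 1 := by
  simpa only [hψ.2.1] using hψ.2.2.2.2 0 t le_rfl ht (by rw [hψ.2.1]; exact one_pos)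

/-- Strict decrease is only assumed while `ψ` is positive; an increase after `ψ` vanishes would,
by the intermediate value theorem, pass through a positive value that `ψ` takes too early. -/
theorem antitoneOn (hψ : IsArchimedeanGenerator ψ) : AntitoneOn ψ (Ici 0) := by
  intro x hx y hy hxy
  by_contra! hlt
  obtain ⟨z, hz, hψz⟩ : ∃ z ∈ Icc x y, ψ z = (ψ x + ψ y) / 2 :=
    intermediate_value_Icc hxy (hψ.1.mono fun t ht => le_trans hx ht.1)
      ⟨by linarith, by linarith⟩
  have hzy : z < y := hz.2.lt_of_ne (by rintro rfl; linarith)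
  have := hψ.2.2.2.2 z y (le_trans hx hz.1) hzy (by linarith [hψ.nonneg hx])
  linarith

theorem lt_of_apply_lt (hψ : IsArchimedeanGenerator ψ) {x y : ℝ} (hx : 0 ≤ x) (hy : 0 ≤ y)
    (h : ψ x < ψ y) : y < x :=
  not_le.1 fun hxy => h.not_ge (hψ.antitoneOn hx hy hxy)

theorem lt_mul_inv_of_lt (hψ : IsArchimedeanGenerator ψ)
    (hψinv : ∀ u ∈ Ioc (0:ℝ) 1, 0 ≤ ψinv u ∧ ψ (ψinv u) = u) {e b q : ℝ} (he : 0 < e)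
    (hb : 0 ≤ b) (hq : q ∈ Ioc (0:ℝ) 1) (h : q < ψ (b / e)) : b < e * ψinv q := by
  obtain ⟨hinv0, hinv⟩ := hψinv q hq
  have := hψ.lt_of_apply_lt hinv0 (div_nonneg hb he.le) (hinv.symm ▸ h)
  rwa [div_lt_iff₀' he] at this

theorem mul_inv_lt_of_lt (hψ : IsArchimedeanGenerator ψ)
    (hψinv : ∀ u ∈ Ioc (0:ℝ) 1, 0 ≤ ψinv u ∧ ψ (ψinv u) = u) {e b q : ℝ} (he : 0 < e)
    (hb : 0 ≤ b) (hq : q ∈ Ioc (0:ℝ) 1) (h : ψ (b / e) < q) : e * ψinv q < b := by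
  obtain ⟨hinv0, hinv⟩ := hψinv q hq
  have := hψ.lt_of_apply_lt (div_nonneg hb he.le) hinv0 (hinv.symm ▸ h)
  rwa [lt_div_iff₀' he] at this

theorem tendsto_one_sub_apply_inv (hψ : IsArchimedeanGenerator ψ) {η : ℕ → ℝ}
    (hη : ∀ n, 0 < η n) (hηtop : Tendsto η atTop atTop) :
    Tendsto (fun n => 1 - ψ (1 / η n)) atTop (𝓝[>] 0) := by
  have hinv : Tendsto (fun n => 1 / η n) atTop (𝓝 0) := by
    simpa only [one_div, Function.comp_def] using tendsto_inv_atTop_zero.comp hηtop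
  have hψ0 := (hψ.1 0 self_mem_Ici).tendsto.comp <| tendsto_nhdsWithin_iff.2
    ⟨hinv, Eventually.of_forall fun n => (one_div_pos.2 (hη n)).le⟩
  rw [hψ.2.1] at hψ0
  refine tendsto_nhdsWithin_iff.2 ⟨?_, Eventually.of_forall fun n =>
    sub_pos.2 (hψ.lt_one (one_div_pos.2 (hη n)))⟩
  simpa only [sub_self, Function.comp_def] using (tendsto_const_nhds (x := (1:ℝ))).sub hψ0

end IsArchimedeanGenerator

section Distortion

variable {ψ ψinv : ℝ → ℝ} {η r : ℕ → ℝ} {ρ : ℝ}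

theorem rate_pos (hψ : IsArchimedeanGenerator ψ) (hη : ∀ n, 0 < η n)
    (hr : ∀ n, r n = 1 / (1 - ψ (1 / η n))) (n : ℕ) : 0 < r n := by
  rw [hr n]
  exact one_div_pos.2 (sub_pos.2 (hψ.lt_one (one_div_pos.2 (hη n))))

theorem tendsto_rate_atTop (hψ : IsArchimedeanGenerator ψ) (hη : ∀ n, 0 < η n)
    (hηtop : Tendsto η atTop atTop) (hr : ∀ n, r n = 1 / (1 - ψ (1 / η n))) :
    Tendsto r atTop atTop := by
  rw [funext hr]
  simpa only [one_div, Function.comp_def] using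
    tendsto_inv_nhdsGT_zero.comp (hψ.tendsto_one_sub_apply_inv hη hηtop)

theorem tendsto_rate_mul_one_sub_apply_div (hηtop : Tendsto η atTop atTop)
    (hr : ∀ n, r n = 1 / (1 - ψ (1 / η n)))
    (hRV : IsRegularlyVarying (fun t => 1 - ψ (1 / t)) (-ρ)) {b : ℝ} (hb : 0 < b) :
    Tendsto (fun n => r n * (1 - ψ (b / η n))) atTop (𝓝 (b ^ ρ)) := by
  have := (hRV b⁻¹ (inv_pos.2 hb)).comp hηtop
  rw [Real.inv_rpow hb.le, Real.rpow_neg hb.le, inv_inv] at this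
  refine this.congr fun n => ?_
  have harg : 1 / (b⁻¹ * η n) = b / η n := by rw [one_div, mul_inv, inv_inv, div_eq_mul_inv]
  simp only [Function.comp_apply, harg, hr n, one_div_mul_eq_div]

/-- Comparing `r (1 - q)` with the limit `b ^ ρ` of `r (1 - ψ (b / η))` decides whether
`q < ψ (b / η)`, i.e. whether `b < η ψ⁻¹(q)`. -/
theorem tendsto_apply_mul_inv_of_tendsto (hψ : IsArchimedeanGenerator ψ)
    (hψinv : ∀ u ∈ Ioc (0:ℝ) 1, 0 ≤ ψinv u ∧ ψ (ψinv u) = u) (hη : ∀ n, 0 < η n)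
    (hr0 : ∀ n, 0 < r n)
    (hrate : ∀ b, 0 < b → Tendsto (fun n => r n * (1 - ψ (b / η n))) atTop (𝓝 (b ^ ρ)))
    (hρ : 0 < ρ) {q : ℕ → ℝ} (hq : ∀ᶠ n in atTop, q n ∈ Ioc (0:ℝ) 1) {L : ℝ} (hL : 0 ≤ L)
    (hlim : Tendsto (fun n => r n * (1 - q n)) atTop (𝓝 L)) :
    Tendsto (fun n => ψ (η n * ψinv (q n))) atTop (𝓝 (ψ (L ^ ρ⁻¹))) := by
  have hs0 : ∀ᶠ n in atTop, 0 ≤ η n * ψinv (q n) :=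
    hq.mono fun n hn => mul_nonneg (hη n).le (hψinv _ hn).1
  have hs : Tendsto (fun n => η n * ψinv (q n)) atTop (𝓝 (L ^ ρ⁻¹)) := by
    refine tendsto_order.2 ⟨fun a ha => ?_, fun b hb => ?_⟩
    · rcases lt_or_ge a 0 with ha0 | ha0
      · exact hs0.mono fun n hn => ha0.trans_le hn
      obtain ⟨b, hab, hb⟩ := exists_between ha
      have hb0 : 0 < b := ha0.trans_lt hab
      obtain ⟨c, hbc, hcL⟩ := exists_between ((Real.lt_rpow_inv_iff_of_pos hb0.le hL hρ).1 hb)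
      filter_upwards [(hrate b hb0).eventually_lt_const hbc, hlim.eventually_const_lt hcL, hq]
        with n h1 h2 hn
      have hqb : q n < ψ (b / η n) := by
        linarith [lt_of_mul_lt_mul_left (h1.trans h2) (hr0 n).le]
      exact hab.trans (hψ.lt_mul_inv_of_lt hψinv (hη n) hb0.le hn hqb)
    · have hb0 : 0 < b := (Real.rpow_nonneg hL _).trans_lt hb
      obtain ⟨c, hLc, hcb⟩ := exists_between ((Real.rpow_inv_lt_iff_of_pos hL hb0.le hρ).1 hb)
      filter_upwards [(hrate b hb0).eventually_const_lt hcb, hlim.eventually_lt_const hLc, hq]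
        with n h1 h2 hn
      have hbq : ψ (b / η n) < q n := by
        linarith [lt_of_mul_lt_mul_left (h2.trans h1) (hr0 n).le]
      exact hψ.mul_inv_lt_of_lt hψinv (hη n) hb0.le hn hbq
  exact (hψ.1 _ (Real.rpow_nonneg hL _)).tendsto.comp (tendsto_nhdsWithin_iff.2 ⟨hs, hs0⟩)

theorem tendsto_delta_zero_of_tendsto_atTop (hψ : IsArchimedeanGenerator ψ)
    (hψinv : ∀ u ∈ Ioc (0:ℝ) 1, 0 ≤ ψinv u ∧ ψ (ψinv u) = u) (hη : ∀ n, 0 < η n)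
    (hr0 : ∀ n, 0 < r n)
    (hrate : ∀ b, 0 < b → Tendsto (fun n => r n * (1 - ψ (b / η n))) atTop (𝓝 (b ^ ρ)))
    {δ : ℕ → ℝ → ℝ} (hδ : ∀ n, δ n 0 = 0 ∧ ∀ u ∈ Ioc (0:ℝ) 1, δ n u = ψ (η n * ψinv u))
    {q : ℕ → ℝ} (hq : ∀ n, q n ∈ Icc (0:ℝ) 1)
    (hlim : Tendsto (fun n => r n * (1 - q n)) atTop atTop) :
    Tendsto (fun n => δ n (q n)) atTop (𝓝 0) := by
  have hδ0 : ∀ n, 0 ≤ δ n (q n) := fun n => by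
    rcases (hq n).1.eq_or_lt with h0 | h0
    · rw [← h0, (hδ n).1]
    · rw [(hδ n).2 _ ⟨h0, (hq n).2⟩]
      exact hψ.nonneg (mul_nonneg (hη n).le (hψinv _ ⟨h0, (hq n).2⟩).1)
  refine tendsto_order.2 ⟨fun a ha => Eventually.of_forall fun n => ha.trans_le (hδ0 n),
    fun ε hε => ?_⟩
  obtain ⟨M, hM⟩ := eventually_atTop.1 (hψ.2.2.2.1.eventually_lt_const hε)
  have hb0 : 0 < max M 1 := one_pos.trans_le (le_max_right _ _)
  filter_upwards [(hrate _ hb0).eventually_lt_const (lt_add_one _),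
    hlim.eventually_gt_atTop (max M 1 ^ ρ + 1)] with n h1 h2
  have hqb : q n < ψ (max M 1 / η n) := by
    linarith [lt_of_mul_lt_mul_left (h1.trans h2) (hr0 n).le]
  rcases (hq n).1.eq_or_lt with h0 | h0
  · rwa [← h0, (hδ n).1]
  · rw [(hδ n).2 _ ⟨h0, (hq n).2⟩]
    exact hM _ ((le_max_left _ _).trans
      (hψ.lt_mul_inv_of_lt hψinv (hη n) hb0.le ⟨h0, (hq n).2⟩ hqb).le)

end Distortion

theorem tendsto_delta_of_tendsto_rpow {ψ ψinv : ℝ → ℝ} {η r : ℕ → ℝ} {ρ : ℝ}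
    {δ : ℕ → ℝ → ℝ} {D : ℝ → ℝ} (hψ : IsArchimedeanGenerator ψ)
    (hψinv : ∀ u ∈ Ioc (0:ℝ) 1, 0 ≤ ψinv u ∧ ψ (ψinv u) = u)
    (hη : ∀ n, 0 < η n) (hηtop : Tendsto η atTop atTop) (hρ : 0 < ρ)
    (hRV : IsRegularlyVarying (fun t => 1 - ψ (1 / t)) (-ρ))
    (hr : ∀ n, r n = 1 / (1 - ψ (1 / η n)))
    (hδ : ∀ n, δ n 0 = 0 ∧ ∀ u ∈ Ioc (0:ℝ) 1, δ n u = ψ (η n * ψinv u))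
    (hD : ∀ u : ℝ, D u = if u = 0 then 0 else ψ ((-Real.log u) ^ (1 / ρ)))
    {a q : ℕ → ℝ} (har : Tendsto (fun n => a n / r n) atTop (𝓝 1))
    (hq : ∀ n, q n ∈ Icc (0:ℝ) 1) {h : ℝ} (hpow : Tendsto (fun n => q n ^ a n) atTop (𝓝 h)) :
    Tendsto (fun n => δ n (q n)) atTop (𝓝 (D h)) := by
  have hr0 := rate_pos hψ hη hr
  have hrate := fun b (hb : 0 < b) => tendsto_rate_mul_one_sub_apply_div hηtop hr hRV hb
  have ha : Tendsto a atTop atTop :=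
    (har.pos_mul_atTop one_pos (tendsto_rate_atTop hψ hη hηtop hr)).congr fun n =>
      div_mul_cancel₀ _ (hr0 n).ne'
  have hra : Tendsto (fun n => (a n / r n)⁻¹) atTop (𝓝 1) := by
    simpa only [inv_one] using har.inv₀ one_ne_zero
  have hrq : ∀ᶠ n in atTop, a n * (1 - q n) * (a n / r n)⁻¹ = r n * (1 - q n) :=
    (ha.eventually_gt_atTop 0).mono fun n hn => by field_simp
  rcases (ge_of_tendsto' hpow fun n => Real.rpow_nonneg (hq n).1 _).eq_or_lt with rfl | hh
  · rw [hD, if_pos rfl]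
    refine tendsto_delta_zero_of_tendsto_atTop hψ hψinv hη hr0 hrate hδ hq ?_
    exact ((tendsto_mul_one_sub_atTop_of_tendsto_rpow_zero ha hpow).atTop_mul_pos one_pos
      hra).congr' hrq
  · have hlim : Tendsto (fun n => r n * (1 - q n)) atTop (𝓝 (-Real.log h)) := by
      simpa only [mul_one] using
        ((tendsto_mul_one_sub_of_tendsto_rpow ha (fun n => (hq n).1) hpow hh).mul hra).congr' hrq
    have hqpos : ∀ᶠ n in atTop, q n ∈ Ioc (0:ℝ) 1 := by
      filter_upwards [hpow.eventually_const_lt hh, ha.eventually_gt_atTop 0] with n hpos hn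
      refine ⟨(hq n).1.lt_of_ne fun h0 => ?_, (hq n).2⟩
      rw [← h0, Real.zero_rpow hn.ne'] at hpos
      exact hpos.false
    have hL : 0 ≤ -Real.log h :=
      ge_of_tendsto' hlim fun n => mul_nonneg (hr0 n).le (sub_nonneg.2 (hq n).2)
    rw [hD, if_neg hh.ne', one_div]
    refine (tendsto_apply_mul_inv_of_tendsto hψ hψinv hη hr0 hrate hρ hqpos hL hlim).congr' ?_
    filter_upwards [hqpos] with n hn
    exact ((hδ n).2 _ hn).symm

/-- Theorem on the limiting distortion for meta-Archimax sequences. -/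
theorem archimax_distortion_limit
    (ψ ψinv : ℝ → ℝ) (η : ℕ → ℝ) (r : ℕ → ℝ) (ρ : ℝ) (δ : ℕ → ℝ → ℝ) (D : ℝ → ℝ)
    (hψ : IsArchimedeanGenerator ψ)
    (hψinv : ∀ u ∈ Ioc (0:ℝ) 1, 0 ≤ ψinv u ∧ ψ (ψinv u) = u)
    (hη : ∀ n, 0 < η n) (hηtop : Tendsto η atTop atTop)
    (hρ : ρ ∈ Ioc (0:ℝ) 1)
    (hRV : ∀ lam : ℝ, 0 < lam →
      Tendsto (fun t : ℝ => (1 - ψ (1 / (lam * t))) / (1 - ψ (1 / t))) atTop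
        (nhds (lam ^ (-ρ))))
    (hr : ∀ n, r n = 1 / (1 - ψ (1 / η n)))
    (hδ : ∀ n, δ n 0 = 0 ∧ ∀ u ∈ Ioc (0:ℝ) 1, δ n u = ψ (η n * ψinv u))
    (hD : ∀ u : ℝ, D u = if u = 0 then 0 else ψ ((-Real.log u) ^ (1 / ρ))) :
    (∀ u ∈ Icc (0:ℝ) 1,
      Tendsto (fun n => δ n (u ^ (1 / r n))) atTop (nhds (D u))) ∧
    ∀ F H : ℝ → ℝ, ∀ cs ds : ℕ → ℝ,
      IsDistFun F → Continuous F → IsGEV H → (∀ n, 0 < cs n) →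
      (∀ x, Tendsto (fun n => F (cs n * x + ds n) ^ n) atTop (nhds (H x))) →
      ∀ x, Tendsto (fun n => δ n (F (cs (Nat.ceil (r n)) * x + ds (Nat.ceil (r n)))))
        atTop (nhds (D (H x))) := by
  have hr0 := rate_pos hψ hη hr
  have hrtop := tendsto_rate_atTop hψ hη hηtop hr
  refine ⟨fun u hu => ?_, fun F H cs ds hF _ _ _ hMDA x => ?_⟩
  · refine tendsto_delta_of_tendsto_rpow hψ hψinv hη hηtop hρ.1 hRV hr hδ hD (a := r)
      (tendsto_const_nhds.congr fun n => (div_self (hr0 n).ne').symm)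
      (fun n => ⟨Real.rpow_nonneg hu.1 _,
        Real.rpow_le_one hu.1 hu.2 (one_div_nonneg.2 (hr0 n).le)⟩)
      (tendsto_const_nhds.congr fun n => ?_)
    rw [one_div, Real.rpow_inv_rpow hu.1 (hr0 n).ne']
  · refine tendsto_delta_of_tendsto_rpow hψ hψinv hη hηtop hρ.1 hRV hr hδ hD
      (tendsto_nat_ceil_div_atTop.comp hrtop) (fun n => hF.2.2.2.2 _) ?_
    simpa only [Real.rpow_natCast, Function.comp_def] using
      (hMDA x).comp (tendsto_nat_ceil_atTop.comp hrtop)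
end

section
/- Let ψ be an Archimedean generator that is differentiable on (0,∞) and let ρ ∈ (0,1]. Then the function D : [0,1] → [0,1] defined by D(u) = ψ((−log u)^{1/ρ}) for u ∈ (0,1), D(0) = 0, D(1) = 1, is a continuous distribution function on [0,1]; its quantile function is D^{−1}(u) = exp(−(ψ^{−1}(u))^ρ), i.e., D(exp(−(ψ^{−1}(u))^ρ)) = u for u ∈ (0,1); D is differentiable on (0,1) with density d(u) = D'(u) = −ψ'((−log u)^{1/ρ}) · (−log u)^{(1−ρ)/ρ} / (ρ u) for u ∈ (0,1); and the boundary limits satisfy lim_{u→0⁺} d(u) = lim_{y→∞} −ψ'(y) y^{1−ρ} e^{y^ρ}/ρ, while lim_{u→1⁻} d(u) = −ψ'(0⁺) if ρ = 1 and lim_{u→1⁻} d(u) = lim_{y→0⁺} −ψ'(y) y^{1−ρ}/ρ if ρ ∈ (0,1) (each boundary equality meaning that one limit exists in [0,∞] if and only if the other does, in which case they are equal). -/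
open Filter Set Topology

open scoped ENNReal

/-! On `(0, 1]` the distortion is `D = ψ ∘ g` with `g u = (-log u) ^ (1/ρ)`, a decreasing
bijection of `(0, 1]` onto `[0, ∞)` with inverse `y ↦ exp (-y ^ ρ)`. Hence `D` is continuous and
nondecreasing because `ψ` is continuous and antitone (strictly decreasing while positive, and
by the intermediate value theorem it stays `0` once it reaches `0`), the quantile identity is
`ψ (ψ⁻¹ u) = u`, and the density is the chain rule. Moreover `d = k ∘ g` with
`k y = -ψ' y * y ^ (1 - ρ) * exp (y ^ ρ) / ρ`, so the limits of `d` at `0⁺` and `1⁻` are those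
of `k` at `∞` and `0⁺`; near `y = 0` the factor `exp (y ^ ρ)` tends to `1`. -/

theorem IsArchimedeanGenerator.antitoneOn_s7 {ψ : ℝ → ℝ} (hψ : IsArchimedeanGenerator ψ) :
    AntitoneOn ψ (Ici 0) := by
  obtain ⟨hcont, -, hmem, -, hstrict⟩ := hψ
  intro s hs t _ hst
  rcases hst.eq_or_lt with rfl | hst
  · exact le_rfl
  by_cases hψs : 0 < ψ s
  · exact (hstrict s t hs hst hψs).le
  by_contra! hψt
  have hψs0 : ψ s = 0 := le_antisymm (not_lt.1 hψs) (hmem s hs).1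
  -- an intermediate value `ψ c = ψ t / 2` with `c < t` contradicts strict decrease at `c`
  obtain ⟨c, hc, hψc⟩ : ψ t / 2 ∈ ψ '' Icc s t :=
    intermediate_value_Icc hst.le (hcont.mono fun x hx => le_trans hs hx.1)
      ⟨by linarith, by linarith⟩
  have hct : c < t := hc.2.lt_of_ne (by rintro rfl; linarith)
  linarith [hstrict c t (le_trans hs hc.1) hct (by linarith)]

theorem Filter.tendsto_comp_iff_of_rightInverse {α β γ : Type*} {F : Filter α} {G : Filter β}
    {l : Filter γ} {g : α → β} {h : β → α} (hg : Tendsto g F G) (hh : Tendsto h G F)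
    (hgh : ∀ᶠ y in G, g (h y) = y) {k : β → γ} :
    Tendsto (fun x => k (g x)) F l ↔ Tendsto k G l :=
  ⟨fun hk => (hk.comp hh).congr' (hgh.mono fun y hy => by simp [hy]), fun hk => hk.comp hg⟩

theorem ENNReal.tendsto_mul_iff_of_tendsto_one {α : Type*} {l : Filter α} {f g : α → ℝ≥0∞}
    {a : ℝ≥0∞} (hg : Tendsto g l (𝓝 1)) :
    Tendsto (fun x => f x * g x) l (𝓝 a) ↔ Tendsto f l (𝓝 a) := by
  refine ⟨fun hfg => ?_, fun hf => by
    simpa using ENNReal.Tendsto.mul hf (Or.inr one_ne_top) hg (Or.inl one_ne_zero)⟩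
  have hginv : Tendsto (fun x => (g x)⁻¹) l (𝓝 1) := by simpa using tendsto_inv_iff.2 hg
  have hfg' : Tendsto (fun x => f x * g x * (g x)⁻¹) l (𝓝 a) := by
    simpa using ENNReal.Tendsto.mul hfg (Or.inr one_ne_top) hginv (Or.inl one_ne_zero)
  refine hfg'.congr' ?_
  filter_upwards [hg.eventually_ne one_ne_zero, hg.eventually_ne one_ne_top] with x h0 htop
  rw [mul_assoc, ENNReal.mul_inv_cancel h0 htop, mul_one]

section Rpow

variable {ρ : ℝ}

theorem neg_log_rpow_exp_neg_rpow (hρ : ρ ≠ 0) {y : ℝ} (hy : 0 ≤ y) :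
    (-Real.log (Real.exp (-(y ^ ρ)))) ^ (1 / ρ) = y := by
  rw [Real.log_exp, neg_neg, one_div, Real.rpow_rpow_inv hy hρ]

theorem exp_neg_rpow_mem_Ioo {y : ℝ} (hy : 0 < y) : Real.exp (-(y ^ ρ)) ∈ Ioo 0 1 :=
  ⟨Real.exp_pos _, Real.exp_lt_one_iff.2 (neg_lt_zero.2 (Real.rpow_pos_of_pos hy ρ))⟩

theorem neg_log_rpow_pos {u : ℝ} (hu : u ∈ Ioo 0 1) : 0 < (-Real.log u) ^ (1 / ρ) :=
  Real.rpow_pos_of_pos (neg_pos.2 (Real.log_neg hu.1 hu.2)) _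

theorem neg_log_rpow_nonneg {u : ℝ} (hu : u ∈ Ioc 0 1) : 0 ≤ (-Real.log u) ^ (1 / ρ) :=
  Real.rpow_nonneg (neg_nonneg.2 (Real.log_nonpos hu.1.le hu.2)) _

theorem antitoneOn_neg_log_rpow (hρ : 0 ≤ ρ) :
    AntitoneOn (fun u => (-Real.log u) ^ (1 / ρ)) (Ioc 0 1) := fun u hu v hv huv =>
  Real.rpow_le_rpow (neg_nonneg.2 (Real.log_nonpos hv.1.le hv.2))
    (neg_le_neg (Real.log_le_log hu.1 huv)) (by positivity)

theorem continuousOn_neg_log_rpow (hρ : 0 ≤ ρ) :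
    ContinuousOn (fun u => (-Real.log u) ^ (1 / ρ)) (Ioi 0) := fun u hu =>
  ((Real.continuousAt_rpow_const _ _ (Or.inr (by positivity))).comp
    (Real.continuousAt_log hu.ne').neg).continuousWithinAt

theorem tendsto_neg_log_rpow_nhdsGT_zero (hρ : 0 < ρ) :
    Tendsto (fun u => (-Real.log u) ^ (1 / ρ)) (𝓝[>] 0) atTop :=
  (tendsto_rpow_atTop (by positivity)).comp
    (tendsto_neg_atBot_atTop.comp Real.tendsto_log_nhdsGT_zero)

theorem tendsto_neg_log_rpow_nhdsLT_one (hρ : 0 < ρ) :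
    Tendsto (fun u => (-Real.log u) ^ (1 / ρ)) (𝓝[<] 1) (𝓝[>] 0) := by
  refine tendsto_nhdsWithin_of_tendsto_nhds_of_eventually_within _ ?_ ?_
  · have := (continuousOn_neg_log_rpow hρ.le).continuousAt (Ioi_mem_nhds one_pos)
    simpa [Real.zero_rpow (inv_pos.2 hρ).ne'] using this.tendsto.mono_left nhdsWithin_le_nhds
  · filter_upwards [Ioo_mem_nhdsLT one_pos] with u hu using neg_log_rpow_pos hu

theorem tendsto_exp_neg_rpow_atTop (hρ : 0 < ρ) :
    Tendsto (fun y : ℝ => Real.exp (-(y ^ ρ))) atTop (𝓝[>] 0) := by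
  refine tendsto_nhdsWithin_of_tendsto_nhds_of_eventually_within _ ?_
    (Eventually.of_forall fun y => Real.exp_pos _)
  exact Real.tendsto_exp_atBot.comp (tendsto_neg_atTop_atBot.comp (tendsto_rpow_atTop hρ))

theorem tendsto_exp_neg_rpow_nhdsGT_zero (hρ : 0 < ρ) :
    Tendsto (fun y : ℝ => Real.exp (-(y ^ ρ))) (𝓝[>] 0) (𝓝[<] 1) := by
  refine tendsto_nhdsWithin_of_tendsto_nhds_of_eventually_within _ ?_
    (eventually_nhdsWithin_of_forall fun y hy => (exp_neg_rpow_mem_Ioo hy).2)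
  have : ContinuousAt (fun y : ℝ => Real.exp (-(y ^ ρ))) 0 :=
    Real.continuous_exp.continuousAt.comp (Real.continuousAt_rpow_const 0 ρ (Or.inr hρ.le)).neg
  simpa [Real.zero_rpow hρ.ne'] using this.tendsto.mono_left nhdsWithin_le_nhds

theorem hasDerivAt_neg_log_rpow (hρ : ρ ≠ 0) {u : ℝ} (hu : u ∈ Ioo 0 1) :
    HasDerivAt (fun u => (-Real.log u) ^ (1 / ρ))
      (-((-Real.log u) ^ ((1 - ρ) / ρ) / (ρ * u))) u := by
  convert (Real.hasDerivAt_log hu.1.ne').neg.rpow_const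
    (p := 1 / ρ) (Or.inl (neg_pos.2 (Real.log_neg hu.1 hu.2)).ne') using 1
  · rfl
  rw [show 1 / ρ - 1 = (1 - ρ) / ρ by field_simp, Pi.neg_apply]
  field_simp

theorem mul_neg_log_rpow_div_eq (hρ : ρ ≠ 0) (c : ℝ) {u : ℝ} (hu : u ∈ Ioo 0 1) :
    c * (-Real.log u) ^ ((1 - ρ) / ρ) / (ρ * u) =
      c * ((-Real.log u) ^ (1 / ρ)) ^ (1 - ρ) * Real.exp (((-Real.log u) ^ (1 / ρ)) ^ ρ) / ρ := by
  have hlog : 0 ≤ -Real.log u := neg_nonneg.2 (Real.log_nonpos hu.1.le hu.2.le)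
  rw [← Real.rpow_mul hlog, ← Real.rpow_mul hlog, one_div_mul_cancel hρ, Real.rpow_one,
    Real.exp_neg, Real.exp_log hu.1, one_div_mul_eq_div]
  field_simp

theorem tendsto_comp_neg_log_rpow_nhdsGT_zero_iff {γ : Type*} {l : Filter γ} {k : ℝ → γ}
    (hρ : 0 < ρ) :
    Tendsto (fun u => k ((-Real.log u) ^ (1 / ρ))) (𝓝[>] 0) l ↔ Tendsto k atTop l :=
  tendsto_comp_iff_of_rightInverse (tendsto_neg_log_rpow_nhdsGT_zero hρ)
    (tendsto_exp_neg_rpow_atTop hρ)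
    ((eventually_ge_atTop 0).mono fun _ hy => neg_log_rpow_exp_neg_rpow hρ.ne' hy)

theorem tendsto_comp_neg_log_rpow_nhdsLT_one_iff {γ : Type*} {l : Filter γ} {k : ℝ → γ}
    (hρ : 0 < ρ) :
    Tendsto (fun u => k ((-Real.log u) ^ (1 / ρ))) (𝓝[<] 1) l ↔ Tendsto k (𝓝[>] 0) l :=
  tendsto_comp_iff_of_rightInverse (tendsto_neg_log_rpow_nhdsLT_one hρ)
    (tendsto_exp_neg_rpow_nhdsGT_zero hρ)
    (eventually_nhdsWithin_of_forall fun _ hy => neg_log_rpow_exp_neg_rpow hρ.ne' (le_of_lt hy))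

theorem tendsto_ofReal_mul_exp_rpow_nhdsGT_zero_iff (hρ : 0 < ρ) {f : ℝ → ℝ} {L : ℝ≥0∞} :
    Tendsto (fun y => ENNReal.ofReal (f y * Real.exp (y ^ ρ))) (𝓝[>] 0) (𝓝 L) ↔
      Tendsto (fun y => ENNReal.ofReal (f y)) (𝓝[>] 0) (𝓝 L) := by
  have hexp : ContinuousAt (fun y : ℝ => Real.exp (y ^ ρ)) 0 :=
    Real.continuous_exp.continuousAt.comp (Real.continuousAt_rpow_const 0 ρ (Or.inr hρ.le))
  have hlim : Tendsto (fun y : ℝ => ENNReal.ofReal (Real.exp (y ^ ρ))) (𝓝[>] 0) (𝓝 1) := by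
    simpa [Real.zero_rpow hρ.ne'] using
      ENNReal.tendsto_ofReal (hexp.tendsto.mono_left nhdsWithin_le_nhds)
  simp_rw [ENNReal.ofReal_mul' (Real.exp_pos _).le]
  exact ENNReal.tendsto_mul_iff_of_tendsto_one hlim

end Rpow

section Distortion

variable {ψ D : ℝ → ℝ} {ρ : ℝ}

theorem archimedeanDistortion_eqOn_Ioc (hψ0 : ψ 0 = 1) (hρ : 0 < ρ) (hD1 : D 1 = 1)
    (hD : ∀ u ∈ Ioo (0:ℝ) 1, D u = ψ ((-Real.log u) ^ (1 / ρ))) :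
    EqOn D (fun u => ψ ((-Real.log u) ^ (1 / ρ))) (Ioc 0 1) := by
  intro u hu
  rcases hu.2.lt_or_eq with hu1 | rfl
  · exact hD u ⟨hu.1, hu1⟩
  · simp [hD1, hψ0, Real.zero_rpow (inv_pos.2 hρ).ne']

theorem archimedeanDistortion_mem_Icc (hψ : IsArchimedeanGenerator ψ) (hD0 : D 0 = 0)
    (hD : EqOn D (fun u => ψ ((-Real.log u) ^ (1 / ρ))) (Ioc 0 1)) :
    ∀ u ∈ Icc (0:ℝ) 1, D u ∈ Icc (0:ℝ) 1 := by
  intro u hu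
  rw [← Ioc_insert_left zero_le_one] at hu
  rcases hu with rfl | hu
  · simp [hD0]
  · rw [hD hu]
    exact hψ.2.2.1 _ (neg_log_rpow_nonneg hu)

theorem archimedeanDistortion_monotoneOn (hψ : IsArchimedeanGenerator ψ) (hρ : 0 ≤ ρ)
    (hD0 : D 0 = 0) (hD : EqOn D (fun u => ψ ((-Real.log u) ^ (1 / ρ))) (Ioc 0 1)) :
    MonotoneOn D (Icc 0 1) := by
  have hmono : MonotoneOn D (Ioc 0 1) := fun u hu v hv huv => by
    rw [hD hu, hD hv]
    exact hψ.antitoneOn_s7 (neg_log_rpow_nonneg hv) (neg_log_rpow_nonneg hu)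
      (antitoneOn_neg_log_rpow hρ hu hv huv)
  rw [← Ioc_insert_left zero_le_one]
  rintro u (rfl | hu) v (rfl | hv) huv
  · exact le_rfl
  · rw [hD0]
    exact (archimedeanDistortion_mem_Icc hψ hD0 hD v (Ioc_subset_Icc_self hv)).1
  · exact absurd huv (not_le.2 hu.1)
  · exact hmono hu hv huv

theorem archimedeanDistortion_continuousOn (hψ : IsArchimedeanGenerator ψ) (hρ : 0 < ρ)
    (hD0 : D 0 = 0) (hD : EqOn D (fun u => ψ ((-Real.log u) ^ (1 / ρ))) (Ioc 0 1)) :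
    ContinuousOn D (Icc 0 1) := by
  have hcont : ContinuousOn D (Ioc 0 1) :=
    (hψ.1.comp ((continuousOn_neg_log_rpow hρ.le).mono fun _ hu => hu.1)
      fun _ hu => neg_log_rpow_nonneg hu).congr hD
  have hlim : ContinuousWithinAt D (Ioc 0 1) 0 := by
    rw [ContinuousWithinAt, hD0]
    refine ((hψ.2.2.2.1.comp (tendsto_neg_log_rpow_nhdsGT_zero hρ)).mono_left
      (nhdsWithin_mono _ Ioc_subset_Ioi_self)).congr' ?_
    filter_upwards [self_mem_nhdsWithin] with u hu using (hD hu).symm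
  rw [← Ioc_insert_left zero_le_one]
  rintro u (rfl | hu)
  · exact continuousWithinAt_insert.2 hlim
  · exact continuousWithinAt_insert.2 (hcont u hu)

theorem archimedeanDistortion_exp_neg_rpow (hρ : ρ ≠ 0)
    (hD : EqOn D (fun u => ψ ((-Real.log u) ^ (1 / ρ))) (Ioc 0 1)) {y : ℝ} (hy : 0 < y) :
    D (Real.exp (-(y ^ ρ))) = ψ y :=
  (hD (Ioo_subset_Ioc_self (exp_neg_rpow_mem_Ioo hy))).trans
    (congrArg ψ (neg_log_rpow_exp_neg_rpow hρ hy.le))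

theorem archimedeanDistortion_hasDerivAt (hψ : DifferentiableOn ℝ ψ (Ioi 0)) (hρ : ρ ≠ 0)
    (hD : EqOn D (fun u => ψ ((-Real.log u) ^ (1 / ρ))) (Ioc 0 1)) {u : ℝ} (hu : u ∈ Ioo 0 1) :
    HasDerivAt D
      (-(deriv ψ ((-Real.log u) ^ (1 / ρ))) * (-Real.log u) ^ ((1 - ρ) / ρ) / (ρ * u)) u := by
  have hψ' := (hψ.differentiableAt (Ioi_mem_nhds (neg_log_rpow_pos (ρ := ρ) hu))).hasDerivAt
  refine ((hψ'.comp u (hasDerivAt_neg_log_rpow hρ hu)).congr_of_eventuallyEq ?_).congr_deriv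
    (by ring)
  filter_upwards [Ioo_mem_nhds hu.1 hu.2] with v hv using hD (Ioo_subset_Ioc_self hv)

end Distortion

/-- Corollary: the Archimedean distortion `D(u) = ψ((−log u)^{1/ρ})` is a distribution
function on `[0,1]`, with the stated quantile function, density and boundary limits. -/
theorem archimedean_distortion_density
    (ψ ψinv : ℝ → ℝ) (ρ : ℝ) (D d : ℝ → ℝ)
    (hψ : IsArchimedeanGenerator ψ)
    (hψdiff : DifferentiableOn ℝ ψ (Ioi 0))
    (hψinv : ∀ u ∈ Ioc (0:ℝ) 1, 0 ≤ ψinv u ∧ ψ (ψinv u) = u)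
    (hρ : ρ ∈ Ioc (0:ℝ) 1)
    (hD0 : D 0 = 0) (hD1 : D 1 = 1)
    (hD : ∀ u ∈ Ioo (0:ℝ) 1, D u = ψ ((-Real.log u) ^ (1 / ρ)))
    (hd : ∀ u ∈ Ioo (0:ℝ) 1,
      d u = -(deriv ψ ((-Real.log u) ^ (1 / ρ))) * (-Real.log u) ^ ((1 - ρ) / ρ) / (ρ * u)) :
    (ContinuousOn D (Icc 0 1) ∧ MonotoneOn D (Icc 0 1) ∧
      ∀ u ∈ Icc (0:ℝ) 1, D u ∈ Icc (0:ℝ) 1) ∧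
    (∀ u ∈ Ioo (0:ℝ) 1, D (Real.exp (-(ψinv u ^ ρ))) = u) ∧
    (∀ u ∈ Ioo (0:ℝ) 1, HasDerivAt D (d u) u) ∧
    (∀ L : ENNReal,
      Tendsto (fun u => ENNReal.ofReal (d u)) (nhdsWithin 0 (Ioo 0 1)) (nhds L) ↔
      Tendsto (fun y : ℝ =>
          ENNReal.ofReal (-(deriv ψ y) * y ^ (1 - ρ) * Real.exp (y ^ ρ) / ρ))
        atTop (nhds L)) ∧
    (∀ L : ENNReal,
      Tendsto (fun u => ENNReal.ofReal (d u)) (nhdsWithin 1 (Ioo 0 1)) (nhds L) ↔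
      Tendsto (fun y : ℝ => ENNReal.ofReal (-(deriv ψ y) * y ^ (1 - ρ) / ρ))
        (nhdsWithin 0 (Ioi 0)) (nhds L)) := by
  obtain ⟨hρ0, -⟩ := hρ
  have hDIoc := archimedeanDistortion_eqOn_Ioc hψ.2.1 hρ0 hD1 hD
  have hd' : ∀ u ∈ Ioo (0:ℝ) 1, d u =
      -(deriv ψ ((-Real.log u) ^ (1 / ρ))) * ((-Real.log u) ^ (1 / ρ)) ^ (1 - ρ) *
        Real.exp (((-Real.log u) ^ (1 / ρ)) ^ ρ) / ρ := fun u hu =>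
    (hd u hu).trans (mul_neg_log_rpow_div_eq hρ0.ne' _ hu)
  refine ⟨⟨archimedeanDistortion_continuousOn hψ hρ0 hD0 hDIoc,
    archimedeanDistortion_monotoneOn hψ hρ0.le hD0 hDIoc,
    archimedeanDistortion_mem_Icc hψ hD0 hDIoc⟩, fun u hu => ?_,
    fun u hu => hd u hu ▸ archimedeanDistortion_hasDerivAt hψdiff hρ0.ne' hDIoc hu,
    fun L => ?_, fun L => ?_⟩
  · obtain ⟨hinv0, hψinvu⟩ := hψinv u ⟨hu.1, hu.2.le⟩
    have hinvpos : 0 < ψinv u := hinv0.lt_of_ne <| by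
      rintro h
      rw [← h, hψ.2.1] at hψinvu
      exact hu.2.ne' hψinvu
    rw [archimedeanDistortion_exp_neg_rpow hρ0.ne' hDIoc hinvpos, hψinvu]
  · rw [nhdsWithin_Ioo_eq_nhdsGT one_pos, ← tendsto_comp_neg_log_rpow_nhdsGT_zero_iff hρ0]
    refine tendsto_congr' ?_
    filter_upwards [Ioo_mem_nhdsGT one_pos] with u hu
    rw [hd' u hu]
  · rw [nhdsWithin_Ioo_eq_nhdsLT zero_lt_one, ← tendsto_ofReal_mul_exp_rpow_nhdsGT_zero_iff hρ0,
      ← tendsto_comp_neg_log_rpow_nhdsLT_one_iff hρ0]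
    refine tendsto_congr' ?_
    filter_upwards [Ioo_mem_nhdsLT zero_lt_one] with u hu
    rw [hd' u hu, mul_div_right_comm]
end
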